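/- arXiv:2512.17957 — 13 statements merged into one kernel-verified Lean document; each statement's English description precedes it below -/
import Mathlib

section
/- For integers t, m with 2 ≤ t < m and S = Δ(m) \ {2m - t}, the Frobenius number of S equals 2m - t, the multiplicity of S equals m, and the genus of S equals m. -/
/-- A numerical semigroup: a subset of ℕ containing 0, closed under addition,
with finite complement. -/
noncomputable def IsNumericalSemigroup (S : Set ℕ) : Prop :=
  0 ∈ S ∧ (∀ a ∈ S, ∀ b ∈ S, a + b ∈ S) ∧ Sᶜ.Finite

/-- The half-line Δ(m) = {0} ∪ {x : m ≤ x}. -/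
noncomputable def Delta (m : ℕ) : Set ℕ := {0} ∪ {x | m ≤ x}

/-- Multiplicity: least nonzero element. -/
noncomputable def mult (S : Set ℕ) : ℕ := sInf {s ∈ S | s ≠ 0}

/-- Frobenius number: largest gap. -/
noncomputable def frob (S : Set ℕ) : ℕ := sSup Sᶜ

/-- Genus: number of gaps. -/
noncomputable def genus (S : Set ℕ) : ℕ := Sᶜ.ncard

/-- The image of S in ℤ. -/
noncomputable def ZS (S : Set ℕ) : Set ℤ := (fun n : ℕ => (n : ℤ)) '' S

/-- Pseudo-Frobenius numbers (as integers). -/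
noncomputable def PF (S : Set ℕ) : Set ℤ :=
  {x | x ∉ ZS S ∧ ∀ s ∈ S, s ≠ 0 → x + (s : ℤ) ∈ ZS S}

/-- Reduced pseudo-Frobenius set. -/
noncomputable def rPF (S : Set ℕ) : Set ℤ :=
  {x | x ∉ ZS S ∧ (frob S : ℤ) - (mult S : ℤ) + 1 ≤ x ∧ x ≤ (frob S : ℤ)}

/-- Type t(S). -/
noncomputable def typ (S : Set ℕ) : ℕ := (PF S).ncard

/-- Reduced type s(S). -/
noncomputable def redtyp (S : Set ℕ) : ℕ := (rPF S).ncard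

/-- Apéry set of n in S. -/
noncomputable def Ap (S : Set ℕ) (n : ℕ) : Set ℕ := {s ∈ S | ∀ u : ℕ, s = u + n → u ∉ S}

/-- Minimal system of generators. -/
noncomputable def msg (S : Set ℕ) : Set ℕ :=
  (S \ {0}) \ {x | ∃ a ∈ S \ {0}, ∃ b ∈ S \ {0}, x = a + b}

/-- Embedding dimension. -/
noncomputable def embdim (S : Set ℕ) : ℕ := (msg S).ncard

/-- Second smallest minimal generator. -/
noncomputable def secondGen (S : Set ℕ) : ℕ := sInf (msg S \ {mult S})

theorem stmt1 (t m : ℕ) (ht : 2 ≤ t) (htm : t < m)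
    (S : Set ℕ) (hS : S = Delta m \ {2 * m - t}) :
    frob S = 2 * m - t ∧ mult S = m ∧ genus S = m := by
  have hmt : m < 2 * m - t := by omega
  have hcompl : Sᶜ = Set.Ioo 0 m ∪ {2 * m - t} := by
    ext x
    simp only [hS, Delta, Set.mem_compl_iff, Set.mem_diff, Set.mem_union,
      Set.mem_singleton_iff, Set.mem_setOf_eq, Set.mem_Ioo]
    omega
  refine ⟨?_, ?_, ?_⟩
  · have : IsGreatest Sᶜ (2 * m - t) := by
      constructor
      · rw [hcompl]; right; rfl
      · intro x hx
        rw [hcompl] at hx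
        rcases hx with h | h
        · simp at h; omega
        · simp at h; omega
    exact this.csSup_eq
  · have : IsLeast {s ∈ S | s ≠ 0} m := by
      constructor
      · refine ⟨?_, by omega⟩
        rw [hS]
        exact ⟨Or.inr (by simp), by simp; omega⟩
      · intro x hx
        obtain ⟨hxS, hx0⟩ := hx
        rw [hS] at hxS
        rcases hxS.1 with h | h
        · simp at h; omega
        · exact h
    exact this.csInf_eq
  · unfold genus
    rw [hcompl, Set.ncard_union_eq]
    · rw [← Finset.coe_Ioo, Set.ncard_coe_finset, Nat.card_Ioo, Set.ncard_singleton]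
      omega
    · rw [Set.disjoint_singleton_right]
      simp; omega
end

section
/- For integers t, m with 2 ≤ t < m and S = Δ(m) \ {2m - t}, the set of pseudo-Frobenius numbers PF(S) equals {m - t + 1, m - t + 2, ..., m - 1} ∪ {2m - t}. -/
theorem stmt2 (t m : ℕ) (ht : 2 ≤ t) (htm : t < m)
    (S : Set ℕ) (hS : S = Delta m \ {2 * m - t}) :
    PF S = {x : ℤ | (m : ℤ) - t + 1 ≤ x ∧ x ≤ (m : ℤ) - 1} ∪ {2 * (m : ℤ) - t} := by
  have hmem : ∀ n : ℕ, n ∈ S ↔ (n = 0 ∨ m ≤ n) ∧ n ≠ 2 * m - t := by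
    intro n; subst hS
    simp [Delta, Set.mem_diff, Set.mem_union, Set.mem_setOf_eq]
  have hZ : ∀ x : ℤ, x ∈ ZS S ↔ ∃ n : ℕ, n ∈ S ∧ (n : ℤ) = x := by
    intro x; simp [ZS, Set.mem_image]
  ext x
  simp only [PF, Set.mem_setOf_eq, Set.mem_union, Set.mem_singleton_iff]
  constructor
  · rintro ⟨h1, h2⟩
    rw [hZ] at h1
    push_neg at h1
    have hmS : m ∈ S := by rw [hmem]; omega
    obtain ⟨n1, hn1S, hn1⟩ := (hZ _).1 (h2 m hmS (by omega))
    rw [hmem] at hn1S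
    by_cases hx0 : x = 2 * (m : ℤ) - t
    · right; exact hx0
    left
    by_contra hcon
    push_neg at hcon
    -- from hn1 : (n1:ℤ) = x + m, x = -m or x ≥ 0
    rcases le_or_gt 0 x with hx | hx
    · -- x ≥ 0, a positive gap
      have hk : x.toNat ∉ S := fun h => h1 x.toNat h (by omega)
      rw [hmem] at hk
      push_neg at hk
      -- so 1 ≤ x ≤ m - t (using hx0 and hcon)
      have hs2S : (2 * m - t - x.toNat) ∈ S := by rw [hmem]; omega
      obtain ⟨n2, hn2S, hn2⟩ := (hZ _).1 (h2 _ hs2S (by omega))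
      rw [hmem] at hn2S
      omega
    · -- x < 0, then x = -m
      have hxm : x = -(m : ℤ) := by omega
      have hs1S : (2 * m - t + 1) ∈ S := by rw [hmem]; omega
      obtain ⟨n2, hn2S, hn2⟩ := (hZ _).1 (h2 _ hs1S (by omega))
      rw [hmem] at hn2S
      omega
  · rintro (⟨ha, hb⟩ | hx)
    · refine ⟨?_, ?_⟩
      · rw [hZ]; rintro ⟨n, hnS, hn⟩; rw [hmem] at hnS; omega
      · intro s hsS hs0
        rw [hmem] at hsS
        rw [hZ]
        exact ⟨x.toNat + s, by rw [hmem]; omega, by omega⟩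
    · subst hx
      refine ⟨?_, ?_⟩
      · rw [hZ]; rintro ⟨n, hnS, hn⟩; rw [hmem] at hnS; omega
      · intro s hsS hs0
        rw [hmem] at hsS
        rw [hZ]
        exact ⟨2 * m - t + s, by rw [hmem]; omega, by omega⟩
end

section
/- For integers t, m with 2 ≤ t < m and S = Δ(m) \ {2m - t}, the reduced pseudo-Frobenius set rPF(S) = {x ∈ ℤ \ S : F(S) - m(S) + 1 ≤ x ≤ F(S)} coincides with PF(S), and hence S has maximal reduced type (s(S) = t(S) = t). -/
/-!
Every gap `x ≥ F - m + 1` is pseudo-Frobenius, since adding a nonzero element `s ≥ m` lands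
above `F`; this half holds in any numerical semigroup. For `S = Δ(m) \ {c}` with `m < c`
we have `F = c`, and a gap `x ≤ c - m` is not pseudo-Frobenius: `c - x` is an element of `S`
(it is `≥ m` and `≠ c` because `x ≠ 0`) with `x + (c - x) = c ∉ S`. Hence
`rPF(S) = PF(S) = [c - m + 1, m - 1] ∪ {c}`, which has `2m - c` elements.
-/

section NumericalSemigroup

variable {S : Set ℕ}

theorem mem_ZS_iff {x : ℤ} : x ∈ ZS S ↔ 0 ≤ x ∧ x.toNat ∈ S := by
  constructor
  · rintro ⟨n, hn, rfl⟩
    simpa using hn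
  · rintro ⟨hx, hxS⟩
    exact ⟨x.toNat, hxS, Int.toNat_of_nonneg hx⟩

theorem mem_of_frob_lt (hS : Sᶜ.Finite) {n : ℕ} (hn : frob S < n) : n ∈ S := by
  by_contra h
  exact (le_csSup hS.bddAbove h).not_gt hn

theorem le_frob_of_notMem_ZS (hS : Sᶜ.Finite) {x : ℤ} (hx : x ∉ ZS S) : x ≤ frob S := by
  by_contra! h
  exact hx (mem_ZS_iff.2 ⟨by omega, mem_of_frob_lt hS (by omega)⟩)

theorem mult_le_of_mem {s : ℕ} (hs : s ∈ S) (hs0 : s ≠ 0) : mult S ≤ s :=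
  Nat.sInf_le ⟨hs, hs0⟩

theorem rPF_subset_PF (hS : Sᶜ.Finite) : rPF S ⊆ PF S := by
  rintro x ⟨hx, hlow, -⟩
  refine ⟨hx, fun s hs hs0 => mem_ZS_iff.2 ?_⟩
  have := mult_le_of_mem hs hs0
  exact ⟨by omega, mem_of_frob_lt hS (by omega)⟩

end NumericalSemigroup

section DeltaSdiffSingleton

variable {m c : ℕ}

theorem mem_Delta_sdiff_singleton {n : ℕ} : n ∈ Delta m \ {c} ↔ (n = 0 ∨ m ≤ n) ∧ n ≠ c := by
  simp [Delta]

theorem finite_compl_Delta_sdiff_singleton (m c : ℕ) : (Delta m \ {c})ᶜ.Finite :=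
  (Set.finite_Iic (m + c)).subset fun n hn => by
    rw [Set.mem_compl_iff, mem_Delta_sdiff_singleton] at hn
    rw [Set.mem_Iic]
    omega

theorem frob_Delta_sdiff_singleton (hmc : m ≤ c) : frob (Delta m \ {c}) = c := by
  have hc : c ∈ (Delta m \ {c})ᶜ := by simp
  refine le_antisymm (csSup_le ⟨c, hc⟩ fun n hn => ?_)
    (le_csSup (finite_compl_Delta_sdiff_singleton m c).bddAbove hc)
  rw [Set.mem_compl_iff, mem_Delta_sdiff_singleton] at hn
  omega

theorem mult_Delta_sdiff_singleton (hm : m ≠ 0) (hmc : m ≠ c) : mult (Delta m \ {c}) = m := by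
  have hmS : m ∈ Delta m \ {c} := mem_Delta_sdiff_singleton.2 ⟨Or.inr le_rfl, hmc⟩
  refine le_antisymm (mult_le_of_mem hmS hm) (le_csInf ⟨m, hmS, hm⟩ ?_)
  rintro n ⟨hn, hn0⟩
  rw [mem_Delta_sdiff_singleton] at hn
  omega

theorem PF_subset_rPF_Delta_sdiff_singleton (hm : m ≠ 0) (hmc : m < c) :
    PF (Delta m \ {c}) ⊆ rPF (Delta m \ {c}) := by
  rintro x ⟨hx, hPF⟩
  refine ⟨hx, ?_, le_frob_of_notMem_ZS (finite_compl_Delta_sdiff_singleton m c) hx⟩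
  rw [frob_Delta_sdiff_singleton hmc.le, mult_Delta_sdiff_singleton hm hmc.ne]
  rw [mem_ZS_iff, mem_Delta_sdiff_singleton] at hx
  by_contra! hlow
  have hs : (c - x).toNat ∈ Delta m \ {c} := mem_Delta_sdiff_singleton.2 (by omega)
  have hc := hPF _ hs (by omega)
  rw [mem_ZS_iff, mem_Delta_sdiff_singleton] at hc
  omega

theorem rPF_Delta_sdiff_singleton (hm : m ≠ 0) (hmc : m < c) :
    rPF (Delta m \ {c}) = ↑(Finset.Icc ((c : ℤ) - m + 1) (m - 1) ∪ {(c : ℤ)}) := by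
  ext x
  simp only [rPF, Set.mem_ofPred_eq, mem_ZS_iff, mem_Delta_sdiff_singleton,
    frob_Delta_sdiff_singleton hmc.le, mult_Delta_sdiff_singleton hm hmc.ne,
    Finset.coe_union, Finset.coe_Icc, Finset.coe_singleton, Set.mem_union, Set.mem_Icc,
    Set.mem_singleton_iff]
  omega

theorem ncard_rPF_Delta_sdiff_singleton (hmc : m < c) (hc : c < 2 * m) :
    (rPF (Delta m \ {c})).ncard = 2 * m - c := by
  have hdisj : Disjoint (Finset.Icc ((c : ℤ) - m + 1) (m - 1)) {(c : ℤ)} := by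
    simp only [Finset.disjoint_singleton_right, Finset.mem_Icc]
    omega
  rw [rPF_Delta_sdiff_singleton (by omega) hmc, Set.ncard_coe_finset,
    Finset.card_union_of_disjoint hdisj, Int.card_Icc, Finset.card_singleton]
  omega

end DeltaSdiffSingleton

theorem stmt3 (t m : ℕ) (ht : 2 ≤ t) (htm : t < m)
    (S : Set ℕ) (hS : S = Delta m \ {2 * m - t}) :
    rPF S = PF S ∧ redtyp S = typ S ∧ typ S = t := by
  subst hS
  have hPF : rPF (Delta m \ {2 * m - t}) = PF (Delta m \ {2 * m - t}) :=
    (rPF_subset_PF (finite_compl_Delta_sdiff_singleton _ _)).antisymm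
      (PF_subset_rPF_Delta_sdiff_singleton (by omega) (by omega))
  refine ⟨hPF, by rw [redtyp, typ, hPF], ?_⟩
  rw [typ, ← hPF, ncard_rPF_Delta_sdiff_singleton (by omega) (by omega)]
  omega
end

section
/- Let S be a non-symmetric numerical semigroup with m(S) < F(S). If S is almost symmetric and has maximal reduced type, then S = Δ(m(S)) \ {2·m(S) − t(S)} with 2 ≤ t(S) < m(S). -/
/-!
Maximal reduced type means that every pseudo-Frobenius number lies in the window
`(F - m, F]`, while almost symmetry gives Nari's symmetry `f ↦ F - f` on `PF(S) \ {F}`. Together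
they force every `f ∈ PF(S) \ {F}` into `(F - m, m)`; as `t(S) ≥ 2` this window is nonempty, so
`F < 2m`. Then every gap `x ≥ m` lies in `(F - m, F]`, hence is pseudo-Frobenius, hence equals `F`.
So `S = Δ(m) \ {F}`, whose genus is `m`, and almost symmetry reads `2m = F + t`.
-/

theorem mult_le {S : Set ℕ} {s : ℕ} (hs : s ∈ S) (hs0 : s ≠ 0) : mult S ≤ s :=
  Nat.sInf_le ⟨hs, hs0⟩

theorem natCast_mem_ZS {S : Set ℕ} {n : ℕ} : (n : ℤ) ∈ ZS S ↔ n ∈ S := by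
  simp [ZS]

/-- `PF S` is the image of this set in `ℤ`, except for `S = ℕ`, where `PF S = {-1}`. -/
def pseudoFrobenius (S : Set ℕ) : Set ℕ :=
  {n | n ∉ S ∧ ∀ s ∈ S, s ≠ 0 → n + s ∈ S}

def reflexiveGaps (S : Set ℕ) : Set ℕ :=
  {x | x ∉ S ∧ frob S - x ∉ S}

namespace IsNumericalSemigroup

variable {S : Set ℕ}

theorem le_frob (hS : IsNumericalSemigroup S) {x : ℕ} (hx : x ∉ S) : x ≤ frob S :=
  le_csSup hS.2.2.bddAbove hx

theorem mem_of_frob_lt (hS : IsNumericalSemigroup S) {x : ℕ} (hx : frob S < x) : x ∈ S :=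
  by_contra fun h => (hS.le_frob h).not_gt hx

theorem frob_notMem (hS : IsNumericalSemigroup S) (hF : 0 < frob S) : frob S ∉ S := by
  have hne : Sᶜ.Nonempty := by
    by_contra h
    rw [Set.not_nonempty_iff_eq_empty] at h
    simp [frob, h] at hF
  exact Nat.sSup_mem hne hS.2.2.bddAbove

theorem mult_pos (hS : IsNumericalSemigroup S) : 0 < mult S :=
  Nat.pos_of_ne_zero (Nat.sInf_mem (s := {s ∈ S | s ≠ 0})
    ⟨frob S + 1, hS.mem_of_frob_lt (Nat.lt_succ_self _), Nat.succ_ne_zero _⟩).2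

theorem intCast_mem_ZS_of_frob_lt (hS : IsNumericalSemigroup S) {z : ℤ}
    (hz : (frob S : ℤ) < z) : z ∈ ZS S :=
  ⟨z.toNat, hS.mem_of_frob_lt (by omega), by simp only; omega⟩

theorem PF_eq_image_pseudoFrobenius (hS : IsNumericalSemigroup S) (hF : frob S ∉ S) :
    PF S = (↑) '' pseudoFrobenius S := by
  ext x
  constructor
  · rintro ⟨hx, hxs⟩
    -- a negative `x` would be sent to the gap `frob S` by the element `frob S - x`
    have hx0 : 0 ≤ x := by
      by_contra hneg
      have := hxs (frob S + x.natAbs) (hS.mem_of_frob_lt (by omega)) (by omega)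
      rw [show x + ((frob S + x.natAbs : ℕ) : ℤ) = (frob S : ℤ) by omega, natCast_mem_ZS] at this
      exact hF this
    lift x to ℕ using hx0
    refine ⟨x, ⟨fun h => hx (natCast_mem_ZS.2 h), fun s hs hs0 => ?_⟩, rfl⟩
    exact natCast_mem_ZS.1 (by exact_mod_cast hxs s hs hs0)
  · rintro ⟨n, ⟨hn, hns⟩, rfl⟩
    exact ⟨fun h => hn (natCast_mem_ZS.1 h), fun s hs hs0 => by
      rw [← Nat.cast_add, natCast_mem_ZS]; exact hns s hs hs0⟩

theorem typ_eq_ncard_pseudoFrobenius (hS : IsNumericalSemigroup S) (hF : frob S ∉ S) :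
    typ S = (pseudoFrobenius S).ncard := by
  rw [typ, hS.PF_eq_image_pseudoFrobenius hF, Set.ncard_image_of_injective _ Nat.cast_injective]

theorem pseudoFrobenius_finite (hS : IsNumericalSemigroup S) : (pseudoFrobenius S).Finite :=
  hS.2.2.subset fun _ hn => hn.1

theorem frob_mem_pseudoFrobenius (hS : IsNumericalSemigroup S) (hF : frob S ∉ S) :
    frob S ∈ pseudoFrobenius S :=
  ⟨hF, fun _ _ hs0 => hS.mem_of_frob_lt (by omega)⟩

theorem mem_pseudoFrobenius_of_frob_lt_add_mult (hS : IsNumericalSemigroup S) {x : ℕ}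
    (hx : x ∉ S) (hxm : frob S < x + mult S) : x ∈ pseudoFrobenius S :=
  ⟨hx, fun s hs hs0 => hS.mem_of_frob_lt (by have := mult_le hs hs0; omega)⟩

theorem rPF_subset_PF (hS : IsNumericalSemigroup S) : rPF S ⊆ PF S :=
  fun _ ⟨hx, hxlb, _⟩ =>
    ⟨hx, fun s hs hs0 => hS.intCast_mem_ZS_of_frob_lt (by have := mult_le hs hs0; omega)⟩

theorem frob_lt_add_mult_of_redtyp_eq_typ (hS : IsNumericalSemigroup S) (hF : frob S ∉ S)
    (hMRT : redtyp S = typ S) {n : ℕ} (hn : n ∈ pseudoFrobenius S) : frob S < n + mult S := by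
  have hPF_fin : (PF S).Finite := by
    rw [hS.PF_eq_image_pseudoFrobenius hF]
    exact hS.pseudoFrobenius_finite.image _
  have hrPF : rPF S = PF S :=
    Set.eq_of_subset_of_ncard_le hS.rPF_subset_PF (by rw [← typ, ← redtyp, hMRT]) hPF_fin
  have hmem : (n : ℤ) ∈ rPF S := by
    rw [hrPF, hS.PF_eq_image_pseudoFrobenius hF]
    exact Set.mem_image_of_mem _ hn
  have := hmem.2.1
  omega

theorem frob_sub_mem_reflexiveGaps (hS : IsNumericalSemigroup S) {x : ℕ}
    (hx : x ∈ reflexiveGaps S) : frob S - x ∈ reflexiveGaps S :=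
  ⟨hx.2, by rw [Nat.sub_sub_self (hS.le_frob hx.1)]; exact hx.1⟩

/-- Each `x ≤ frob S` is a gap or reflects to one (else `frob S ∈ S`), so the gaps and their
reflections cover `[0, frob S]`, overlapping exactly in the reflexive gaps. -/
theorem two_mul_genus_eq (hS : IsNumericalSemigroup S) (hF : frob S ∉ S) :
    2 * genus S = frob S + 1 + (reflexiveGaps S).ncard := by
  set F := frob S
  set R := (F - ·) '' Sᶜ
  have hR : ∀ x, x ∈ R ↔ x ≤ F ∧ F - x ∉ S := by
    intro x
    constructor
    · rintro ⟨y, hy, rfl⟩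
      exact ⟨Nat.sub_le _ _, by rwa [Nat.sub_sub_self (hS.le_frob hy)]⟩
    · rintro ⟨hxF, hx⟩
      exact ⟨F - x, hx, Nat.sub_sub_self hxF⟩
  have hunion : Sᶜ ∪ R = Set.Iic F := by
    ext x
    simp only [Set.mem_union, Set.mem_compl_iff, hR, Set.mem_Iic]
    refine ⟨fun h => h.elim hS.le_frob And.left, fun hxF => ?_⟩
    by_cases hx : x ∈ S
    · refine Or.inr ⟨hxF, fun h => hF ?_⟩
      simpa [Nat.add_sub_cancel' hxF] using hS.2.1 x hx _ h
    · exact Or.inl hx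
  have hinter : Sᶜ ∩ R = reflexiveGaps S := by
    ext x
    simp only [Set.mem_inter_iff, Set.mem_compl_iff, hR, reflexiveGaps, Set.mem_ofPred_eq]
    exact ⟨fun h => ⟨h.1, h.2.2⟩, fun h => ⟨h.1, hS.le_frob h.1, h.2⟩⟩
  have hRcard : R.ncard = Sᶜ.ncard :=
    Set.InjOn.ncard_image fun x hx y hy hxy => by
      have := hS.le_frob hx; have := hS.le_frob hy; omega
  have := Set.ncard_union_add_ncard_inter Sᶜ R hS.2.2 (hS.2.2.image _)
  rw [hunion, hinter, Set.ncard_Iic_nat, hRcard] at this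
  rw [genus]
  omega

/-- Nari: the pseudo-Frobenius numbers other than `F` are reflexive gaps, and almost symmetry
says, via `two_mul_genus_eq`, that there are no other reflexive gaps. -/
theorem frob_sub_mem_pseudoFrobenius (hS : IsNumericalSemigroup S) (hF : frob S ∉ S)
    (hAS : 2 * genus S = frob S + typ S) {n : ℕ} (hn : n ∈ pseudoFrobenius S)
    (hnF : n ≠ frob S) : frob S - n ∈ pseudoFrobenius S := by
  have hsub : pseudoFrobenius S \ {frob S} ⊆ reflexiveGaps S := by
    rintro x ⟨hx, hxF⟩
    have hxle := hS.le_frob hx.1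
    refine ⟨hx.1, fun h => hF ?_⟩
    have := hx.2 _ h (by simp only [Set.mem_singleton_iff] at hxF; omega)
    rwa [Nat.add_sub_cancel' hxle] at this
  have heq : pseudoFrobenius S \ {frob S} = reflexiveGaps S := by
    refine Set.eq_of_subset_of_ncard_le hsub ?_ (hS.2.2.subset fun _ hx => hx.1)
    have := hS.two_mul_genus_eq hF
    rw [Set.ncard_sdiff_singleton_of_mem (hS.frob_mem_pseudoFrobenius hF),
      ← hS.typ_eq_ncard_pseudoFrobenius hF]
    omega
  have := hS.frob_sub_mem_reflexiveGaps (heq ▸ ⟨hn, hnF⟩ : n ∈ reflexiveGaps S)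
  rw [← heq] at this
  exact this.1

theorem eq_delta_diff_frob (hS : IsNumericalSemigroup S) (hF : frob S ∉ S)
    (h2m : frob S < 2 * mult S) (hPF : ∀ n ∈ pseudoFrobenius S, n ≠ frob S → n < mult S) :
    S = Delta (mult S) \ {frob S} := by
  ext x
  simp only [Delta, Set.mem_sdiff, Set.mem_union, Set.mem_singleton_iff, Set.mem_ofPred_eq]
  constructor
  · intro hx
    refine ⟨?_, fun h => hF (h ▸ hx)⟩
    rcases eq_or_ne x 0 with h | h
    · exact Or.inl h
    · exact Or.inr (mult_le hx h)
  · rintro ⟨rfl | hxm, hxF⟩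
    · exact hS.1
    · by_contra hx
      exact (hPF x (hS.mem_pseudoFrobenius_of_frob_lt_add_mult hx (by omega)) hxF).not_ge hxm

end IsNumericalSemigroup

theorem genus_delta_diff {m f : ℕ} (hm : 0 < m) (hmf : m ≤ f) : genus (Delta m \ {f}) = m := by
  have hcompl : (Delta m \ {f})ᶜ = insert f (Set.Ioo 0 m) := by
    ext x
    simp only [Delta, Set.mem_compl_iff, Set.mem_sdiff, Set.mem_union, Set.mem_singleton_iff,
      Set.mem_ofPred_eq, Set.mem_insert_iff, Set.mem_Ioo]
    omega
  rw [genus, hcompl, Set.ncard_insert_of_notMem (by simp; omega), Set.ncard_Ioo_nat]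
  omega

theorem stmt6 (S : Set ℕ) (hNS : IsNumericalSemigroup S)
    (hnonsym : typ S ≠ 1) (hmF : mult S < frob S)
    (hAS : 2 * genus S = frob S + typ S) (hMRT : redtyp S = typ S) :
    S = Delta (mult S) \ {2 * mult S - typ S} ∧ 2 ≤ typ S ∧ typ S < mult S := by
  have hF : frob S ∉ S := hNS.frob_notMem (by omega)
  have htyp := hNS.typ_eq_ncard_pseudoFrobenius hF
  have hPF : ∀ n ∈ pseudoFrobenius S, n ≠ frob S → frob S < n + mult S ∧ n < mult S := by
    intro n hn hnF
    have hn_le := hNS.le_frob hn.1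
    have hreflect := hNS.frob_lt_add_mult_of_redtyp_eq_typ hF hMRT
      (hNS.frob_sub_mem_pseudoFrobenius hF hAS hn hnF)
    exact ⟨hNS.frob_lt_add_mult_of_redtyp_eq_typ hF hMRT hn, by omega⟩
  have ht0 : 0 < typ S := htyp ▸ (Set.ncard_pos hNS.pseudoFrobenius_finite).2
    ⟨_, hNS.frob_mem_pseudoFrobenius hF⟩
  obtain ⟨n₀, hn₀, hn₀F⟩ :=
    Set.exists_ne_of_one_lt_ncard (by omega : 1 < (pseudoFrobenius S).ncard) (frob S)
  have h2m : frob S < 2 * mult S := by have := hPF n₀ hn₀ hn₀F; omega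
  have hSeq := hNS.eq_delta_diff_frob hF h2m fun n hn hnF => (hPF n hn hnF).2
  have hg : genus S = mult S :=
    (congrArg genus hSeq).trans (genus_delta_diff hNS.mult_pos hmF.le)
  refine ⟨hSeq.trans ?_, by omega, by omega⟩
  rw [show 2 * mult S - typ S = frob S by omega]
end

section
/- Let S be a non-symmetric almost symmetric numerical semigroup with maximal reduced type and m(S) < F(S). Then F(S) ≤ 2·m(S) − 2, equivalently F(S)/2 ≤ m(S) − 1. -/
theorem stmt7 (S : Set ℕ) (hNS : IsNumericalSemigroup S)
    (hnonsym : typ S ≠ 1) (hmF : mult S < frob S)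
    (hAS : 2 * genus S = frob S + typ S) (hMRT : redtyp S = typ S) :
    frob S ≤ 2 * mult S - 2 := by
  obtain ⟨h0, hadd, hfin⟩ := hNS
  have hFpos : 0 < frob S := lt_of_le_of_lt (Nat.zero_le _) hmF
  have hcne : Sᶜ.Nonempty := by
    by_contra h
    rw [Set.not_nonempty_iff_eq_empty] at h
    have : frob S = 0 := by simp [frob, h]
    omega
  have hbdd : BddAbove Sᶜ := hfin.bddAbove
  have hFnot : frob S ∉ S := Nat.sSup_mem hcne hbdd
  have hgt : ∀ x : ℕ, frob S < x → x ∈ S := by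
    intro x hx
    by_contra hxS
    exact absurd (le_csSup hbdd (hxS : x ∈ Sᶜ)) (not_le.mpr hx)
  have hMne : ({s ∈ S | s ≠ 0} : Set ℕ).Nonempty :=
    ⟨frob S + 1, hgt _ (Nat.lt_succ_self _), by omega⟩
  have hmS : mult S ∈ S := (Nat.sInf_mem hMne).1
  have hm0 : mult S ≠ 0 := (Nat.sInf_mem hMne).2
  have hmle : ∀ s ∈ S, s ≠ 0 → mult S ≤ s := fun s hs hs0 => Nat.sInf_le ⟨hs, hs0⟩
  have hZS : ∀ x : ℕ, (x : ℤ) ∈ ZS S ↔ x ∈ S := by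
    intro x
    constructor
    · rintro ⟨y, hy, he⟩
      obtain rfl : y = x := by simpa using he
      exact hy
    · intro h; exact ⟨x, h, rfl⟩
  have hgapsub : ∀ x ∈ Sᶜ, x ≤ frob S := fun x hx => le_csSup hbdd hx
  -- bounds on PF elements
  have hPFbd : ∀ f ∈ PF S, 0 < f ∧ f ≤ (frob S : ℤ) := by
    rintro f ⟨hfZ, hfs⟩
    have hle : f ≤ (frob S : ℤ) := by
      by_contra hlt
      push_neg at hlt
      have h0f : 0 ≤ f := le_trans (by positivity) (le_of_lt hlt)
      have : (f.toNat : ℤ) = f := Int.toNat_of_nonneg h0f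
      have hmem : f.toNat ∈ S := hgt _ (by omega)
      exact hfZ (by rw [← this]; exact (hZS _).2 hmem)
    refine ⟨?_, hle⟩
    by_contra hpos
    push_neg at hpos
    have hne : f ≠ 0 := by
      intro h
      exact hfZ (by rw [h]; exact (hZS 0).2 h0)
    have hneg : f < 0 := lt_of_le_of_ne hpos hne
    set k : ℕ := (-f).toNat with hk
    have hkz : (k : ℤ) = -f := Int.toNat_of_nonneg (by omega)
    have hsS : frob S + k ∈ S := hgt _ (by omega)
    have := hfs _ hsS (by omega)
    have heq : f + ((frob S + k : ℕ) : ℤ) = (frob S : ℤ) := by push_cast; omega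
    rw [heq] at this
    exact hFnot ((hZS _).1 this)
  have hFPF : (frob S : ℤ) ∈ PF S := by
    refine ⟨fun h => hFnot ((hZS _).1 h), fun s hs hs0 => ?_⟩
    have : frob S + s ∈ S := hgt _ (by omega)
    have h2 : ((frob S + s : ℕ) : ℤ) = (frob S : ℤ) + s := by push_cast; ring
    rw [← h2]
    exact (hZS _).2 this
  have hPFfin : (PF S).Finite := by
    apply (Set.finite_Icc (0 : ℤ) (frob S)).subset
    intro f hf
    obtain ⟨h1, h2⟩ := hPFbd f hf
    exact ⟨le_of_lt h1, h2⟩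
  -- counting
  set A : Set ℕ := S ∩ Set.Iic (frob S) with hA
  set L : Set ℕ := {x | x ∉ S ∧ frob S - x ∉ S} with hL
  have hAfin : A.Finite := ((Set.finite_Iic (frob S)).subset (Set.inter_subset_right))
  have hLfin : L.Finite := hfin.subset (fun x hx => hx.1)
  have hcard1 : A.ncard + Sᶜ.ncard = frob S + 1 := by
    have hun : (Set.Iic (frob S) : Set ℕ) = A ∪ Sᶜ := by
      ext x
      simp only [hA, Set.mem_Iic, Set.mem_union, Set.mem_inter_iff, Set.mem_compl_iff]
      constructor
      · intro hx
        by_cases hxS : x ∈ S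
        · exact Or.inl ⟨hxS, hx⟩
        · exact Or.inr hxS
      · rintro (⟨_, hx⟩ | hx)
        · exact hx
        · exact hgapsub x hx
    have hdisj : Disjoint A Sᶜ := by
      rw [Set.disjoint_left]
      rintro x ⟨hx, -⟩ hx'
      exact hx' hx
    have := Set.ncard_union_eq hdisj hAfin hfin
    rw [← hun] at this
    rw [← this]
    rw [← Finset.coe_Iic, Set.ncard_coe_finset, Nat.card_Iic]
  have hcard2 : Sᶜ.ncard = A.ncard + L.ncard := by
    have hun : (Sᶜ : Set ℕ) = ((fun a => frob S - a) '' A) ∪ L := by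
      ext x
      simp only [Set.mem_union, Set.mem_image, Set.mem_compl_iff, hL, Set.mem_setOf_eq,
        hA, Set.mem_inter_iff, Set.mem_Iic]
      constructor
      · intro hx
        by_cases hFx : frob S - x ∈ S
        · left
          refine ⟨frob S - x, ⟨hFx, by omega⟩, ?_⟩
          have := hgapsub x hx
          omega
        · exact Or.inr ⟨hx, hFx⟩
      · rintro (⟨a, ⟨haS, haF⟩, rfl⟩ | ⟨hx, -⟩)
        · intro hcon
          have : a + (frob S - a) = frob S := by omega
          exact hFnot (this ▸ hadd a haS _ hcon)
        · exact hx
    have hdisj : Disjoint ((fun a => frob S - a) '' A) L := by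
      rw [Set.disjoint_left]
      rintro x ⟨a, ⟨haS, haF⟩, he⟩ ⟨-, hx2⟩
      simp only at he
      simp only [Set.mem_Iic] at haF
      subst he
      have heq : frob S - (frob S - a) = a := by omega
      rw [heq] at hx2
      exact hx2 haS
    have himg : ((fun a => frob S - a) '' A).ncard = A.ncard := by
      apply Set.ncard_image_of_injOn
      intro a ha b hb hab
      simp only [hA, Set.mem_inter_iff, Set.mem_Iic] at ha hb
      simp only at hab
      omega
    rw [hun, Set.ncard_union_eq hdisj (hAfin.image _) hLfin, himg]
  have hLt : typ S = L.ncard + 1 := by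
    have hg : genus S = Sᶜ.ncard := rfl
    omega
  -- PF' as a natural set
  set P : Set ℕ := {x | (x : ℤ) ∈ PF S ∧ x ≠ frob S} with hP
  have hPfin : P.Finite := by
    apply (Set.finite_Iic (frob S)).subset
    intro x hx
    have := (hPFbd _ hx.1).2
    simpa using by exact_mod_cast this
  have hPcard : typ S = P.ncard + 1 := by
    have hun : PF S = ((fun n : ℕ => (n : ℤ)) '' P) ∪ {(frob S : ℤ)} := by
      ext f
      simp only [Set.mem_union, Set.mem_image, Set.mem_singleton_iff, hP, Set.mem_setOf_eq]
      constructor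
      · intro hf
        obtain ⟨h1, h2⟩ := hPFbd f hf
        by_cases hfF : f = (frob S : ℤ)
        · exact Or.inr hfF
        · left
          refine ⟨f.toNat, ⟨?_, ?_⟩, Int.toNat_of_nonneg (le_of_lt h1)⟩
          · rw [Int.toNat_of_nonneg (le_of_lt h1)]; exact hf
          · intro h
            apply hfF
            rw [← Int.toNat_of_nonneg (le_of_lt h1), h]
      · rintro (⟨n, ⟨hn, -⟩, rfl⟩ | rfl)
        · exact hn
        · exact hFPF
    have hdisj : Disjoint ((fun n : ℕ => (n : ℤ)) '' P) {(frob S : ℤ)} := by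
      rw [Set.disjoint_right]
      rintro x rfl ⟨n, ⟨-, hn⟩, he⟩
      exact hn (by simpa using he)
    have himg : ((fun n : ℕ => (n : ℤ)) '' P).ncard = P.ncard :=
      Set.ncard_image_of_injective _ (fun a b h => by exact_mod_cast h)
    have := Set.ncard_union_eq hdisj (hPfin.image _) (Set.finite_singleton _)
    rw [← hun] at this
    simp only [Set.ncard_singleton] at this
    rw [typ, this, himg]
  have hPsubL : P ⊆ L := by
    rintro x ⟨hx, hxF⟩
    obtain ⟨hxZ, hxs⟩ := hx
    have hxS : x ∉ S := fun h => hxZ ((hZS x).2 h)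
    have hxle : x ≤ frob S := by
      have := (hPFbd _ ⟨hxZ, hxs⟩).2
      exact_mod_cast this
    refine ⟨hxS, ?_⟩
    intro hFx
    have hne : frob S - x ≠ 0 := by omega
    have := hxs _ hFx hne
    have heq : (x : ℤ) + ((frob S - x : ℕ) : ℤ) = (frob S : ℤ) := by
      have : ((frob S - x : ℕ) : ℤ) = (frob S : ℤ) - x := by omega
      omega
    rw [heq] at this
    exact hFnot ((hZS _).1 this)
  have hPL : P = L := by
    apply Set.eq_of_subset_of_ncard_le hPsubL _ hLfin
    omega
  -- symmetry of PF for almost symmetric semigroups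
  have hsym : ∀ f ∈ PF S, f ≠ (frob S : ℤ) → (frob S : ℤ) - f ∈ PF S := by
    intro f hf hfF
    obtain ⟨h1, h2⟩ := hPFbd f hf
    set n : ℕ := f.toNat with hn
    have hnz : (n : ℤ) = f := Int.toNat_of_nonneg (le_of_lt h1)
    have hnP : n ∈ P := ⟨by rw [hnz]; exact hf, fun h => hfF (by rw [← hnz, h])⟩
    have hnL : n ∈ L := hPsubL hnP
    have hnle : n ≤ frob S := by omega
    have hFnL : frob S - n ∈ L := by
      refine ⟨hnL.2, ?_⟩
      have : frob S - (frob S - n) = n := by omega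
      rw [this]
      exact hnL.1
    have hFnP : frob S - n ∈ P := hPL ▸ hFnL
    have : ((frob S - n : ℕ) : ℤ) = (frob S : ℤ) - f := by omega
    rw [← this]
    exact hFnP.1
  -- rPF ⊆ PF, hence rPF = PF by maximal reduced type
  have hrsub : rPF S ⊆ PF S := by
    rintro x ⟨hxZ, hx1, hx2⟩
    refine ⟨hxZ, fun s hs hs0 => ?_⟩
    have hms : mult S ≤ s := hmle s hs hs0
    have hx0 : 0 < x := by omega
    have hy : ((x + s).toNat : ℤ) = x + s := Int.toNat_of_nonneg (by omega)
    have hyS : (x + s).toNat ∈ S := by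
      apply hgt
      omega
    rw [← hy]
    exact (hZS _).2 hyS
  have hrPF : rPF S = PF S :=
    Set.eq_of_subset_of_ncard_le hrsub (le_of_eq hMRT.symm) hPFfin
  -- get a pseudo-Frobenius number ≠ F
  have ht2 : 1 < typ S := by
    have h1 : 0 < (PF S).ncard := (Set.ncard_pos hPFfin).2 ⟨_, hFPF⟩
    have : typ S = (PF S).ncard := rfl
    omega
  obtain ⟨f, hf, hfF⟩ := Set.exists_ne_of_one_lt_ncard ht2 (frob S : ℤ)
  have hf1 : (frob S : ℤ) - (mult S : ℤ) + 1 ≤ f := by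
    have := hrPF ▸ hf
    exact this.2.1
  have hFf : (frob S : ℤ) - f ∈ PF S := hsym f hf hfF
  have hf2 : (frob S : ℤ) - (mult S : ℤ) + 1 ≤ (frob S : ℤ) - f := (hrPF ▸ hFf).2.1
  omega
end

section
/- Let S ≠ ℕ be a numerical semigroup with minimal generating system {m(S) = n₁ < n₂ < ... }. If n ∈ Ap(S, m(S)) \ {0} and n ≤ 2·n₂ − 1, then n is a minimal generator of S. -/
theorem stmt8 (S : Set ℕ) (hNS : IsNumericalSemigroup S) (hS : S ≠ Set.univ)
    (n : ℕ) (hn : n ∈ Ap S (mult S)) (hn0 : n ≠ 0)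
    (hle : n ≤ 2 * secondGen S - 1) :
    n ∈ msg S := by
  obtain ⟨h0, hadd, -⟩ := hNS
  set m := mult S with hm
  have key : ∀ x, x ∈ Ap S m → x ≠ 0 → x ∈ msg S ∨ 2 * secondGen S ≤ x := by
    intro x
    induction x using Nat.strong_induction_on with
    | _ x ih =>
      intro hx hx0
      by_cases hmsg : x ∈ msg S
      · exact Or.inl hmsg
      · right
        have hxS : x ∈ S := hx.1
        have hdecomp : x ∈ {x | ∃ a ∈ S \ {0}, ∃ b ∈ S \ {0}, x = a + b} := by
          by_contra hc
          exact hmsg ⟨⟨hxS, hx0⟩, hc⟩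
        obtain ⟨a, ⟨haS, ha0⟩, b, ⟨hbS, hb0⟩, hab⟩ := hdecomp
        simp only [Set.mem_singleton_iff] at ha0 hb0
        have hApa : a ∈ Ap S m := by
          refine ⟨haS, ?_⟩
          intro u hu huS
          exact hx.2 (u + b) (by omega) (hadd u huS b hbS)
        have hApb : b ∈ Ap S m := by
          refine ⟨hbS, ?_⟩
          intro u hu huS
          exact hx.2 (u + a) (by omega) (hadd u huS a haS)
        have step : ∀ c, c ∈ Ap S m → c ≠ 0 → c < x → secondGen S ≤ c := by
          intro c hc hc0 hcx
          rcases ih c hcx hc hc0 with h | h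
          · have hcm : c ≠ m := fun h' => hc.2 0 (by omega) h0
            have : c ∈ msg S \ {mult S} := ⟨h, by simpa [← hm] using hcm⟩
            simpa [secondGen] using Nat.sInf_le this
          · omega
        have ha := step a hApa ha0 (by omega)
        have hb := step b hApb hb0 (by omega)
        omega
  rcases key n hn hn0 with h | h
  · exact h
  · omega
end

section
/- For integers t, m with 2 ≤ t = m − 1 (i.e., S = Δ(m) \ {m+1} with m ≥ 3), the Apéry set Ap(S, m) equals {0, m+2, m+3, ..., 2m−1, 2m+1} and the minimal generating set of S equals {m, m+2, ..., 2m−1, 2m+1}; in particular e(S) = m. -/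
/-! In `S = Δ(m) \ {m + 1}` every nonzero element is at least `m`, so a sum of two nonzero
elements is at least `2m`; it is never `2m + 1`, since the only split of `2m + 1` into parts
`≥ m` uses the gap `m + 1`, and every other `x ≥ 2m` is `m + (x - m)` with `x - m ∈ S`. Hence
the minimal generators are the elements of `S` below `2m` together with `2m + 1`, and the Apéry
set is read off in the same way from `x - m ∉ S`. -/

theorem mem_Ap_iff {S : Set ℕ} {n x : ℕ} : x ∈ Ap S n ↔ x ∈ S ∧ (n ≤ x → x - n ∉ S) := by
  refine and_congr_right fun _ => ⟨fun h hnx => h _ (by omega), ?_⟩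
  rintro h u rfl
  simpa using h (by omega)

theorem mem_msg_iff {S : Set ℕ} {x : ℕ} :
    x ∈ msg S ↔ x ∈ S ∧ x ≠ 0 ∧ ¬∃ a ∈ S \ {0}, ∃ b ∈ S \ {0}, x = a + b := by
  simp only [msg, Set.mem_sdiff, Set.mem_singleton_iff, Set.mem_ofPred_eq, and_assoc]

section DeltaDiffSucc

variable {m x : ℕ}

theorem mem_Delta_diff_succ : x ∈ Delta m \ {m + 1} ↔ (x = 0 ∨ m ≤ x) ∧ x ≠ m + 1 := by
  simp [Delta]

theorem Ap_Delta_diff_succ (hm : 1 ≤ m) :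
    Ap (Delta m \ {m + 1}) m = {0} ∪ {x | m + 2 ≤ x ∧ x ≤ 2 * m - 1} ∪ {2 * m + 1} := by
  ext x
  simp only [mem_Ap_iff, mem_Delta_diff_succ, Set.mem_union, Set.mem_singleton_iff,
    Set.mem_ofPred_eq]
  omega

theorem exists_add_eq_Delta_diff_succ_iff (hm : 1 ≤ m) :
    (∃ a ∈ (Delta m \ {m + 1}) \ {0}, ∃ b ∈ (Delta m \ {m + 1}) \ {0}, x = a + b) ↔
      2 * m ≤ x ∧ x ≠ 2 * m + 1 := by
  simp only [Delta, Set.mem_sdiff, Set.mem_union, Set.mem_singleton_iff, Set.mem_ofPred_eq]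
  constructor
  · rintro ⟨a, ha, b, hb, rfl⟩
    omega
  · intro hx
    by_cases hx2m : x = 2 * m
    · exact ⟨m, by omega, m, by omega, by omega⟩
    · exact ⟨m, by omega, x - m, by omega, by omega⟩

theorem msg_Delta_diff_succ (hm : 1 ≤ m) :
    msg (Delta m \ {m + 1}) = {m} ∪ {x | m + 2 ≤ x ∧ x ≤ 2 * m - 1} ∪ {2 * m + 1} := by
  ext x
  simp only [mem_msg_iff, exists_add_eq_Delta_diff_succ_iff hm, mem_Delta_diff_succ,
    Set.mem_union, Set.mem_singleton_iff, Set.mem_ofPred_eq]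
  omega

theorem embdim_Delta_diff_succ (hm : 2 ≤ m) : embdim (Delta m \ {m + 1}) = m := by
  have hfin : msg (Delta m \ {m + 1}) =
      ↑(insert m (insert (2 * m + 1) (Finset.Icc (m + 2) (2 * m - 1)))) := by
    ext x
    simp only [msg_Delta_diff_succ (by omega : 1 ≤ m), Set.mem_union, Set.mem_singleton_iff,
      Set.mem_ofPred_eq, Finset.coe_insert, Finset.coe_Icc, Set.mem_insert_iff, Set.mem_Icc]
    omega
  rw [embdim, hfin, Set.ncard_coe_finset,
    Finset.card_insert_of_notMem (by simp only [Finset.mem_insert, Finset.mem_Icc]; omega),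
    Finset.card_insert_of_notMem (by simp), Nat.card_Icc]
  omega

end DeltaDiffSucc

theorem stmt10 (m : ℕ) (hm : 3 ≤ m)
    (S : Set ℕ) (hS : S = Delta m \ {m + 1}) :
    Ap S m = {0} ∪ {x | m + 2 ≤ x ∧ x ≤ 2 * m - 1} ∪ {2 * m + 1} ∧
    msg S = {m} ∪ {x | m + 2 ≤ x ∧ x ≤ 2 * m - 1} ∪ {2 * m + 1} ∧
    embdim S = m := by
  subst hS
  exact ⟨Ap_Delta_diff_succ (by omega), msg_Delta_diff_succ (by omega),
    embdim_Delta_diff_succ (by omega)⟩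
end

section
/- For integers t, m with 2 ≤ t ≤ m − 2 and S = Δ(m) \ {2m − t}, the Apéry set Ap(S, m) equals ({0, m+1, ..., 2m−1} \ {2m−t}) ∪ {3m−t}, and msg(S) = {m, m+1, ..., 2m−1} \ {2m−t}; in particular e(S) = m − 1. -/
theorem stmt11 (t m : ℕ) (ht : 2 ≤ t) (htm : t ≤ m - 2)
    (S : Set ℕ) (hS : S = Delta m \ {2 * m - t}) :
    Ap S m = (({0} ∪ {x | m + 1 ≤ x ∧ x ≤ 2 * m - 1}) \ {2 * m - t}) ∪ {3 * m - t} ∧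
    msg S = {x | m ≤ x ∧ x ≤ 2 * m - 1} \ {2 * m - t} ∧
    embdim S = m - 1 := by
  subst hS
  have hm : t + 2 ≤ m := by omega
  have hmemS : ∀ x, x ∈ Delta m \ {2 * m - t} ↔ (x = 0 ∨ m ≤ x) ∧ x ≠ 2 * m - t := by
    intro x
    simp [Delta, Set.mem_diff, Set.mem_union, Set.mem_setOf_eq, Set.mem_singleton_iff]
  have hmsg : msg (Delta m \ {2 * m - t}) = {x | m ≤ x ∧ x ≤ 2 * m - 1} \ {2 * m - t} := by
    ext x
    simp only [msg, Set.mem_diff, Set.mem_setOf_eq, Set.mem_singleton_iff, hmemS]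
    constructor
    · rintro ⟨⟨⟨hx, hne⟩, hx0⟩, hsum⟩
      refine ⟨⟨by omega, ?_⟩, hne⟩
      by_contra h
      push_neg at h
      by_cases h3 : x = 3 * m - t
      · exact hsum ⟨m + 1, ⟨⟨by omega, by omega⟩, by omega⟩,
          2 * m - t - 1, ⟨⟨by omega, by omega⟩, by omega⟩, by omega⟩
      · exact hsum ⟨m, ⟨⟨by omega, by omega⟩, by omega⟩,
          x - m, ⟨⟨by omega, by omega⟩, by omega⟩, by omega⟩
    · rintro ⟨⟨h1, h2⟩, hne⟩
      refine ⟨⟨⟨Or.inr h1, hne⟩, by omega⟩, ?_⟩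
      rintro ⟨a, ⟨⟨ha, _⟩, ha0⟩, b, ⟨⟨hb, _⟩, hb0⟩, hx⟩
      omega
  refine ⟨?_, hmsg, ?_⟩
  · ext x
    simp only [Ap, Set.mem_setOf_eq, hmemS, Set.mem_union, Set.mem_diff,
      Set.mem_singleton_iff, Set.mem_setOf_eq]
    constructor
    · rintro ⟨⟨hx, hne⟩, hap⟩
      by_cases h0 : x = 0
      · exact Or.inl ⟨Or.inl h0, by omega⟩
      have hxm : m ≤ x := by omega
      have hxnm : x ≠ m := by
        intro he
        exact hap 0 (by omega) ⟨Or.inl rfl, by omega⟩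
      by_cases h2 : x ≤ 2 * m - 1
      · exact Or.inl ⟨Or.inr ⟨by omega, h2⟩, hne⟩
      · right
        by_contra h3
        exact hap (x - m) (by omega) ⟨Or.inr (by omega), by omega⟩
    · rintro (⟨(h0 | ⟨h1, h2⟩), hne⟩ | h3)
      · exact ⟨⟨Or.inl h0, hne⟩, fun u hu => by omega⟩
      · refine ⟨⟨Or.inr (by omega), hne⟩, fun u hu => ?_⟩
        rintro ⟨(h | h), _⟩ <;> omega
      · refine ⟨⟨Or.inr (by omega), by omega⟩, fun u hu => ?_⟩
        rintro ⟨(h | h), hu2⟩ <;> omega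
  · rw [embdim, hmsg]
    have : {x | m ≤ x ∧ x ≤ 2 * m - 1} \ {2 * m - t}
        = ↑((Finset.Icc m (2 * m - 1)).erase (2 * m - t)) := by
      ext x
      simp [Finset.mem_erase, Finset.mem_Icc, and_comm]
    rw [this, Set.ncard_coe_finset, Finset.card_erase_of_mem (by simp [Finset.mem_Icc]; omega),
      Nat.card_Icc]
    omega
end

section
/- Let S ≠ ℕ be a numerical semigroup that is almost symmetric and has maximal reduced type. Then t(S) ≤ e(S) − 1. -/
set_option maxHeartbeats 1000000 in
theorem stmt12 (S : Set ℕ) (hNS : IsNumericalSemigroup S) (hS : S ≠ Set.univ)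
    (hAS : 2 * genus S = frob S + typ S) (hMRT : redtyp S = typ S) :
    typ S ≤ embdim S - 1 := by
  classical
  obtain ⟨h0, hadd, hc⟩ := hNS
  set m := mult S with hm_def
  set F := frob S with hF_def
  -- complement nonempty
  have hcne : Sᶜ.Nonempty := Set.nonempty_compl.mpr hS
  have hbdd : BddAbove Sᶜ := hc.bddAbove
  have hFnot : F ∉ S := Nat.sSup_mem hcne hbdd
  have hFmax : ∀ x, x ∉ S → x ≤ F := fun x hx => le_csSup hbdd hx
  have hFlt : ∀ x, F < x → x ∈ S := by
    intro x hx; by_contra h; exact absurd (hFmax x h) (by omega)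
  -- multiplicity basics
  have hTne : {s ∈ S | s ≠ 0}.Nonempty := ⟨F + 1, hFlt _ (Nat.lt_succ_self F), by omega⟩
  have hmmem : m ∈ S ∧ m ≠ 0 := Nat.sInf_mem hTne
  have hmS : m ∈ S := hmmem.1
  have hmle : ∀ s ∈ S, s ≠ 0 → m ≤ s := fun s hs hs0 => Nat.sInf_le ⟨hs, hs0⟩
  have hlt_notS : ∀ x, x ≠ 0 → x < m → x ∉ S := by
    intro x hx0 hxm hxS; exact absurd (hmle x hxS hx0) (by omega)
  have hm2 : 2 ≤ m := by
    rcases Nat.lt_or_ge m 2 with h | h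
    · interval_cases m
      · exact absurd rfl hmmem.2
      · exfalso; apply hS
        ext x; simp only [Set.mem_univ, iff_true]
        induction x with
        | zero => exact h0
        | succ n ih => exact hadd n ih 1 hmS
    · exact h
  have hFm1 : m - 1 ≤ F := hFmax _ (hlt_notS (m-1) (by omega) (by omega))
  have hFnem : F ≠ m := fun h => hFnot (h ▸ hmS)
  -- ZS membership
  have hZS : ∀ n : ℕ, (n : ℤ) ∈ ZS S ↔ n ∈ S := by
    intro n
    constructor
    · rintro ⟨k, hk, hkn⟩; simpa [Nat.cast_injective hkn] using hk
    · intro hn; exact ⟨n, hn, rfl⟩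
  -- natPF
  set natPF : Set ℕ := {x | x ∉ S ∧ ∀ s ∈ S, s ≠ 0 → x + s ∈ S} with hnatPF_def
  have hPFeq : PF S = (fun n : ℕ => (n : ℤ)) '' natPF := by
    ext z
    constructor
    · rintro ⟨hz1, hz2⟩
      have hzm : z + (m:ℤ) ∈ ZS S := hz2 m hmS hmmem.2
      obtain ⟨n, hn, hnz⟩ := hzm
      have hnz' : (n:ℤ) = z + m := hnz
      have hz0 : 0 ≤ z := by
        by_contra hneg
        have hnm : n < m := by omega
        have hn0 : n = 0 := by
          by_contra h; exact hlt_notS n h hnm hn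
        have hzeq : z = -(m:ℤ) := by omega
        have hFs : F + m ∈ S := hFlt _ (by omega)
        have := hz2 (F + m) hFs (by omega)
        rw [hzeq] at this
        have : ((F:ℤ)) ∈ ZS S := by convert this using 1; push_cast; ring
        exact hFnot ((hZS F).mp this)
      obtain ⟨x, rfl⟩ : ∃ x : ℕ, z = (x:ℤ) := ⟨z.toNat, (Int.toNat_of_nonneg hz0).symm⟩
      refine ⟨x, ⟨fun hx => hz1 ((hZS x).mpr hx), ?_⟩, rfl⟩
      intro s hs hs0
      have := hz2 s hs hs0
      rw [show (x:ℤ) + (s:ℤ) = ((x + s : ℕ) : ℤ) by push_cast; ring] at this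
      exact (hZS _).mp this
    · rintro ⟨x, ⟨hx1, hx2⟩, rfl⟩
      refine ⟨fun h => hx1 ((hZS x).mp h), fun s hs hs0 => ?_⟩
      rw [show (x:ℤ) + (s:ℤ) = ((x + s : ℕ) : ℤ) by push_cast; ring]
      exact (hZS _).mpr (hx2 s hs hs0)
  have htyp : typ S = natPF.ncard := by
    rw [typ, hPFeq, Set.ncard_image_of_injective _ (fun a b h => by exact_mod_cast h)]
  -- natrPF
  set natrPF : Set ℕ := {x | x ∉ S ∧ F + 1 ≤ x + m ∧ x ≤ F} with hnatrPF_def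
  have hrPFeq : rPF S = (fun n : ℕ => (n : ℤ)) '' natrPF := by
    ext z
    constructor
    · rintro ⟨hz1, hz2, hz3⟩
      have hz0 : 0 ≤ z := by
        have h1 : m ≤ F + 1 := by omega
        have h2 : (m:ℤ) ≤ (F:ℤ) + 1 := by exact_mod_cast h1
        omega
      obtain ⟨x, rfl⟩ : ∃ x : ℕ, z = (x:ℤ) := ⟨z.toNat, (Int.toNat_of_nonneg hz0).symm⟩
      have hz2' : (F:ℤ) - (m:ℤ) + 1 ≤ (x:ℤ) := hz2
      have hz3' : x ≤ F := by exact_mod_cast (show (x:ℤ) ≤ (F:ℤ) from hz3)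
      refine ⟨x, ⟨fun hx => hz1 ((hZS x).mpr hx), ?_, hz3'⟩, rfl⟩
      omega
    · rintro ⟨x, ⟨hx1, hx2, hx3⟩, rfl⟩
      refine ⟨fun h => hx1 ((hZS x).mp h), ?_, ?_⟩
      · show (F:ℤ) - (m:ℤ) + 1 ≤ (x:ℤ)
        have : (x:ℤ) + m ≥ F + 1 := by exact_mod_cast hx2
        omega
      · show (x:ℤ) ≤ (F:ℤ)
        exact_mod_cast hx3
  have hredtyp : redtyp S = natrPF.ncard := by
    rw [redtyp, hrPFeq, Set.ncard_image_of_injective _ (fun a b h => by exact_mod_cast h)]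
  -- natrPF ⊆ natPF, finiteness, equality
  have hsub : natrPF ⊆ natPF := by
    rintro x ⟨hx1, hx2, hx3⟩
    refine ⟨hx1, fun s hs hs0 => hFlt _ ?_⟩
    have := hmle s hs hs0; omega
  have hPFfin : natPF.Finite := hc.subset (fun x hx => hx.1)
  have hPFeqr : natrPF = natPF :=
    Set.eq_of_subset_of_ncard_le hsub (by rw [← htyp, ← hredtyp, hMRT]) hPFfin
  have hwin : ∀ x ∈ natPF, F + 1 ≤ x + m ∧ x ≤ F := by
    intro x hx; rw [← hPFeqr] at hx; exact ⟨hx.2.1, hx.2.2⟩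
  have hFPF : F ∈ natPF := by
    refine ⟨hFnot, fun s hs hs0 => hFlt _ (by omega)⟩
  -- counting setup
  set A : Finset ℕ := (Finset.range (F+1)).filter (· ∈ S) with hA_def
  set B : Finset ℕ := (Finset.range (F+1)).filter (· ∉ S) with hB_def
  have hAB : A.card + B.card = F + 1 := by
    rw [hA_def, hB_def]
    simpa using Finset.card_filter_add_card_filter_not (s := Finset.range (F+1)) (· ∈ S)
  have hgenus : genus S = B.card := by
    rw [genus, ← Set.ncard_coe_finset]
    congr 1
    ext x
    simp only [hB_def, Finset.coe_filter, Finset.mem_range, Set.mem_setOf_eq, Set.mem_compl_iff]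
    exact ⟨fun h => ⟨by have := hFmax x h; omega, h⟩, fun h => h.2⟩
  set P : Finset ℕ := B.filter (fun x => ∀ s ∈ S, s ≠ 0 → x + s ∈ S) with hP_def
  have hPnat : (↑P : Set ℕ) = natPF := by
    ext x
    simp only [hP_def, hB_def, Finset.coe_filter, Finset.mem_filter, Finset.mem_range,
      Set.mem_setOf_eq, hnatPF_def]
    constructor
    · rintro ⟨⟨_, h2⟩, h3⟩; exact ⟨h2, h3⟩
    · rintro ⟨h1, h2⟩; exact ⟨⟨by have := hFmax x h1; omega, h1⟩, h2⟩
  have htypP : typ S = P.card := by rw [htyp, ← hPnat, Set.ncard_coe_finset]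
  have hFP : F ∈ P := by rw [← Finset.mem_coe, hPnat]; exact hFPF
  have ht1 : 1 ≤ typ S := by rw [htypP]; exact Finset.card_pos.mpr ⟨F, hFP⟩
  -- the image of A under (F - ·)
  have himgsub : A.image (F - ·) ⊆ B := by
    intro y hy
    obtain ⟨x, hx, rfl⟩ := Finset.mem_image.mp hy
    rw [hA_def, Finset.mem_filter, Finset.mem_range] at hx
    rw [hB_def, Finset.mem_filter, Finset.mem_range]
    refine ⟨by omega, fun hFx => ?_⟩
    have : x + (F - x) ∈ S := hadd x hx.2 (F - x) hFx
    rw [show x + (F - x) = F by omega] at this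
    exact hFnot this
  have himgcard : (A.image (F - ·)).card = A.card := by
    apply Finset.card_image_of_injOn
    intro x hx y hy hxy
    have hxy' : F - x = F - y := hxy
    rw [hA_def, Finset.mem_coe, Finset.mem_filter, Finset.mem_range] at hx hy
    omega
  set C : Finset ℕ := B \ (A.image (F - ·)) with hC_def
  have hCcard : C.card = typ S - 1 := by
    rw [hC_def, Finset.card_sdiff_of_subset himgsub, himgcard]
    omega
  set P' : Finset ℕ := P.erase F with hP'_def
  have hP'card : P'.card = typ S - 1 := by
    rw [hP'_def, Finset.card_erase_of_mem hFP, htypP]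
  have hP'C : P' ⊆ C := by
    intro x hx
    rw [hP'_def, Finset.mem_erase] at hx
    obtain ⟨hxF, hxP⟩ := hx
    have hxPF : x ∈ natPF := by rw [← hPnat]; exact hxP
    rw [hC_def, Finset.mem_sdiff]
    constructor
    · rw [hP_def, Finset.mem_filter] at hxP; exact hxP.1
    · intro himg
      obtain ⟨y, hy, hyx⟩ := Finset.mem_image.mp himg
      rw [hA_def, Finset.mem_filter, Finset.mem_range] at hy
      have hyx' : F - y = x := hyx
      have hy0 : y ≠ 0 := by intro h; apply hxF; omega
      have := hxPF.2 y hy.2 hy0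
      rw [show x + y = F by omega] at this
      exact hFnot this
  have hP'eq : P' = C := Finset.eq_of_subset_of_card_le hP'C (by omega)
  -- the key symmetry fact
  have hkey : ∀ x, x ∉ S → x ≠ F → (F - x) ∉ S → x ∈ natPF := by
    intro x hx hxF hFx
    have hxB : x ∈ B := by
      rw [hB_def, Finset.mem_filter, Finset.mem_range]
      exact ⟨by have := hFmax x hx; omega, hx⟩
    have hxC : x ∈ C := by
      rw [hC_def, Finset.mem_sdiff]
      refine ⟨hxB, fun himg => ?_⟩
      obtain ⟨y, hy, hyx⟩ := Finset.mem_image.mp himg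
      rw [hA_def, Finset.mem_filter, Finset.mem_range] at hy
      have hyx' : F - y = x := hyx
      have hxle : x ≤ F := hFmax x hx
      have : y = F - x := by omega
      exact hFx (this ▸ hy.2)
    rw [← hP'eq, hP'_def] at hxC
    rw [← hPnat]
    exact Finset.mem_coe.mpr (Finset.mem_of_mem_erase hxC)
  -- symmetry consequence: PF elements other than F are ≤ m - 1
  have hsym : ∀ x ∈ natPF, x ≠ F → x ≤ m - 1 := by
    intro x hx hxF
    have hxle : x ≤ F := (hwin x hx).2
    have hx0 : x ≠ 0 := fun h => hx.1 (h ▸ h0)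
    have hFxnot : F - x ∉ S := by
      intro hFx
      have := hx.2 (F - x) hFx (by omega)
      rw [show x + (F - x) = F by omega] at this
      exact hFnot this
    have hFxF : F - x ≠ F := by omega
    have hFFx : F - (F - x) ∉ S := by rw [show F - (F - x) = x by omega]; exact hx.1
    have := (hwin (F - x) (hkey (F - x) hFxnot hFxF hFFx)).1
    omega
  -- msg basics
  have hmsg_mem : ∀ x, x ∈ msg S ↔ (x ∈ S ∧ x ≠ 0 ∧ ¬∃ a ∈ S \ {0}, ∃ b ∈ S \ {0}, x = a + b) := by
    intro x
    simp only [msg, Set.mem_diff, Set.mem_singleton_iff, Set.mem_setOf_eq]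
    tauto
  have hmsg_fin : (msg S).Finite := by
    apply (Set.finite_Icc 1 (F + m)).subset
    intro x hx
    rw [hmsg_mem] at hx
    obtain ⟨hxS, hx0, hxsum⟩ := hx
    constructor
    · omega
    · by_contra hgt
      push_neg at hgt
      exact hxsum ⟨m, ⟨hmS, hmmem.2⟩, x - m, ⟨hFlt _ (by omega), by simp only [Set.mem_singleton_iff]; omega⟩, by omega⟩
  have hm_msg : m ∈ msg S := by
    rw [hmsg_mem]
    refine ⟨hmS, hmmem.2, ?_⟩
    rintro ⟨a, ⟨ha, ha0⟩, b, ⟨hb, hb0⟩, hab⟩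
    have := hmle a ha ha0; have := hmle b hb hb0; omega
  -- a second generator exists
  have hgen2 : ∃ x ∈ msg S, x ≠ m := by
    have hT2ne : {s ∈ S | ¬ m ∣ s}.Nonempty := by
      by_cases h1 : m ∣ (F + 1)
      · refine ⟨F + 2, hFlt _ (by omega), fun h2 => ?_⟩
        have h3 : m ∣ 1 := by
          have := Nat.dvd_sub h2 h1
          rwa [show F + 2 - (F + 1) = 1 by omega] at this
        have := Nat.le_of_dvd one_pos h3
        omega
      · exact ⟨F + 1, hFlt _ (by omega), h1⟩
    obtain ⟨x, ⟨hxS, hxnd⟩, hxmin⟩ :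
        ∃ x, (x ∈ S ∧ ¬ m ∣ x) ∧ ∀ y ∈ S, ¬ m ∣ y → x ≤ y :=
      ⟨sInf {s ∈ S | ¬ m ∣ s}, Nat.sInf_mem hT2ne, fun y hy hnd => Nat.sInf_le ⟨hy, hnd⟩⟩
    refine ⟨x, ?_, ?_⟩
    swap
    · intro h; apply hxnd; rw [h]
    rw [hmsg_mem]
    refine ⟨hxS, ?_, ?_⟩
    · intro h; apply hxnd; rw [h]; exact dvd_zero m
    rintro ⟨a, ⟨ha, ha0⟩, b, ⟨hb, hb0⟩, hab⟩
    have hma := hmle a ha ha0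
    have hmb := hmle b hb hb0
    by_cases hda : m ∣ a
    · have hdb : ¬ m ∣ b := fun hdb => hxnd (hab ▸ Nat.dvd_add hda hdb)
      have := hxmin b hb hdb
      omega
    · have := hxmin a ha hda
      omega
  have he2 : 2 ≤ embdim S := by
    obtain ⟨x, hx, hxm⟩ := hgen2
    rw [embdim]
    exact (Set.one_lt_ncard hmsg_fin).mpr ⟨m, hm_msg, x, hx, fun h => hxm h.symm⟩
  -- main case split
  rcases Nat.lt_or_ge (typ S) 2 with ht | ht
  · omega
  -- typ ≥ 2: get f ∈ natPF, f ≠ F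
  obtain ⟨f, hfP'⟩ : P'.Nonempty := by
    rw [← Finset.card_pos, hP'card]; omega
  rw [hP'_def, Finset.mem_erase] at hfP'
  have hfPF : f ∈ natPF := by rw [← hPnat]; exact hfP'.2
  have hfm : f ≤ m - 1 := hsym f hfPF hfP'.1
  have hF2m : F ≤ 2 * m - 2 := by
    have := (hwin f hfPF).1; omega
  -- case on F
  rcases Nat.lt_or_ge F m with hFcase | hFcase
  · -- F = m - 1 : half-line case
    have hFeq : F = m - 1 := by omega
    -- typ ≤ m - 1
    have htub : typ S ≤ m - 1 := by
      rw [htyp]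
      have : natPF ⊆ Set.Icc 1 (m - 1) := by
        intro x hx
        have hx0 : x ≠ 0 := fun h => hx.1 (h ▸ h0)
        have := hFmax x hx.1
        exact ⟨by omega, by omega⟩
      calc natPF.ncard ≤ (Set.Icc 1 (m-1)).ncard := Set.ncard_le_ncard this (Set.finite_Icc _ _)
        _ = m - 1 := by
            rw [← Finset.coe_Icc, Set.ncard_coe_finset, Nat.card_Icc]; omega
    -- embdim ≥ m
    have helb : m ≤ embdim S := by
      have hsubm : (Set.Icc m (2*m - 1)) ⊆ msg S := by
        intro x hx
        obtain ⟨hx1, hx2⟩ := hx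
        rw [hmsg_mem]
        refine ⟨hFlt _ (by omega), by omega, ?_⟩
        rintro ⟨a, ⟨ha, ha0⟩, b, ⟨hb, hb0⟩, hab⟩
        have := hmle a ha ha0; have := hmle b hb hb0; omega
      calc m = (Set.Icc m (2*m-1)).ncard := by
              rw [← Finset.coe_Icc, Set.ncard_coe_finset, Nat.card_Icc]; omega
        _ ≤ embdim S := Set.ncard_le_ncard hsubm hmsg_fin
    omega
  · -- F ≥ m + 1
    have hFge : m + 1 ≤ F := by omega
    have hm3 : 3 ≤ m := by omega
    -- all x ≥ m with x ≠ F are in S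
    have hmid : ∀ x, m ≤ x → x ≠ F → x ∈ S := by
      intro x hxm hxF
      by_contra hxS
      have hxgtm : m < x := lt_of_le_of_ne hxm (fun h => hxS (h ▸ hmS))
      have hxltF : x < F := by have := hFmax x hxS; omega
      by_cases hFx : F - x ∈ S
      · have h1 : F - x ≠ 0 := by omega
        have h2 : F - x < m := by omega
        exact hlt_notS (F - x) h1 h2 hFx
      · have := hsym x (hkey x hxS hxF hFx) hxF
        omega
    -- typ ≤ 2m - F
    have htub : typ S ≤ 2*m - F := by
      rw [htyp]
      have hss : natPF ⊆ insert F (Set.Icc (F + 1 - m) (m - 1)) := by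
        intro x hx
        by_cases hxF : x = F
        · exact hxF ▸ Set.mem_insert _ _
        · refine Set.mem_insert_of_mem _ ⟨?_, hsym x hx hxF⟩
          have := (hwin x hx).1; omega
      calc natPF.ncard ≤ (insert F (Set.Icc (F + 1 - m) (m - 1))).ncard :=
            Set.ncard_le_ncard hss ((Set.finite_Icc _ _).insert F)
        _ ≤ (Set.Icc (F + 1 - m) (m - 1)).ncard + 1 := Set.ncard_insert_le _ _
        _ = 2*m - F := by
            rw [← Finset.coe_Icc, Set.ncard_coe_finset, Nat.card_Icc]; omega
    -- embdim ≥ 2m - F + 1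
    have helb : 2*m - F + 1 ≤ embdim S := by
      set x₀ : ℕ := if F = m + 1 then 2*m + 1 else m + 1 with hx₀_def
      have hx₀msg : x₀ ∈ msg S := by
        rw [hmsg_mem]
        by_cases hF1 : F = m + 1
        · rw [hx₀_def, if_pos hF1]
          refine ⟨hFlt _ (by omega), by omega, ?_⟩
          rintro ⟨a, ⟨ha, ha0⟩, b, ⟨hb, hb0⟩, hab⟩
          have hma := hmle a ha ha0
          have hmb := hmle b hb hb0
          have : a = m ∨ a = m + 1 := by omega
          rcases this with h | h
          · have : b = m + 1 := by omega
            exact hFnot (hF1 ▸ this ▸ hb)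
          · exact hFnot (hF1 ▸ h ▸ ha)
        · rw [hx₀_def, if_neg hF1]
          refine ⟨hmid (m+1) (by omega) (by omega), by omega, ?_⟩
          rintro ⟨a, ⟨ha, ha0⟩, b, ⟨hb, hb0⟩, hab⟩
          have := hmle a ha ha0; have := hmle b hb hb0; omega
      have hIccmsg : Set.Icc (F+1) (2*m - 1) ⊆ msg S := by
        intro x hx
        obtain ⟨hx1, hx2⟩ := hx
        rw [hmsg_mem]
        refine ⟨hFlt _ (by omega), by omega, ?_⟩
        rintro ⟨a, ⟨ha, ha0⟩, b, ⟨hb, hb0⟩, hab⟩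
        have := hmle a ha ha0; have := hmle b hb hb0; omega
      have hsubM : insert m (insert x₀ (Set.Icc (F+1) (2*m-1))) ⊆ msg S := by
        intro x hx
        rcases hx with h | h
        · exact h ▸ hm_msg
        · rcases h with h | h
          · exact h ▸ hx₀msg
          · exact hIccmsg h
      have hx₀notIcc : x₀ ∉ Set.Icc (F+1) (2*m-1) := by
        rw [hx₀_def]
        by_cases hF1 : F = m + 1
        · rw [if_pos hF1]; intro h; obtain ⟨_, h2⟩ := h; omega
        · rw [if_neg hF1]; intro h; obtain ⟨h1, _⟩ := h; omega
      have hmnot : m ∉ insert x₀ (Set.Icc (F+1) (2*m-1)) := by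
        intro h
        rcases h with h | h
        · rw [hx₀_def] at h; by_cases hF1 : F = m + 1
          · rw [if_pos hF1] at h; omega
          · rw [if_neg hF1] at h; omega
        · obtain ⟨h1, _⟩ := h; omega
      have hcardM : (insert m (insert x₀ (Set.Icc (F+1) (2*m-1)))).ncard = 2*m - F + 1 := by
        rw [Set.ncard_insert_of_notMem hmnot (((Set.finite_Icc _ _).insert x₀)),
            Set.ncard_insert_of_notMem hx₀notIcc (Set.finite_Icc _ _),
            ← Finset.coe_Icc, Set.ncard_coe_finset, Nat.card_Icc]
        omega
      calc 2*m - F + 1 = (insert m (insert x₀ (Set.Icc (F+1) (2*m-1)))).ncard := hcardM.symm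
        _ ≤ embdim S := Set.ncard_le_ncard hsubM hmsg_fin
    omega
end

section
/- For integers m ≥ 3 and S = Δ(m) \ {2m − 1}, the semigroup S is symmetric with Frobenius number 2m − 1, Ap(S, m) = {0, m+1, ..., 2m−2, 3m−1}, msg(S) = {m, m+1, ..., 2m−2}, and e(S) = m − 1. -/
theorem stmt14 (m : ℕ) (hm : 3 ≤ m)
    (S : Set ℕ) (hS : S = Delta m \ {2 * m - 1}) :
    typ S = 1 ∧ frob S = 2 * m - 1 ∧
    Ap S m = {0} ∪ {x | m + 1 ≤ x ∧ x ≤ 2 * m - 2} ∪ {3 * m - 1} ∧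
    msg S = {x | m ≤ x ∧ x ≤ 2 * m - 2} ∧
    embdim S = m - 1 := by
  have hmem : ∀ x : ℕ, x ∈ S ↔ x = 0 ∨ (m ≤ x ∧ x ≠ 2 * m - 1) := by
    intro x
    subst hS
    simp only [Delta, Set.mem_diff, Set.mem_union, Set.mem_singleton_iff, Set.mem_setOf_eq]
    omega
  have hZ : ∀ x : ℤ, x ∈ ZS S ↔ (x = 0 ∨ ((m : ℤ) ≤ x ∧ x ≠ 2 * (m : ℤ) - 1)) := by
    intro x
    simp only [ZS, Set.mem_image]
    constructor
    · rintro ⟨n, hn, rfl⟩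
      rw [hmem] at hn
      omega
    · intro h
      refine ⟨x.toNat, ?_, by omega⟩
      rw [hmem]
      omega
  have hPF : PF S = {(2 * (m : ℤ) - 1)} := by
    ext x
    simp only [PF, Set.mem_setOf_eq, Set.mem_singleton_iff]
    constructor
    · rintro ⟨hx, hall⟩
      rw [hZ] at hx
      have h1 : x + (m : ℤ) ∈ ZS S := by
        refine hall m ?_ (by omega)
        rw [hmem]; omega
      have h2 : x + ((m : ℕ) + 1 : ℕ) ∈ ZS S := by
        refine hall (m + 1) ?_ (by omega)
        rw [hmem]; omega
      rw [hZ] at h1 h2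
      push_cast at h2
      by_contra hne
      -- now 1 ≤ x ≤ m - 2
      have hx1 : 1 ≤ x ∧ x ≤ (m : ℤ) - 2 := by omega
      have h3 : x + ((2 * m - 1 - x.toNat : ℕ) : ℤ) ∈ ZS S := by
        refine hall _ ?_ (by omega)
        rw [hmem]; omega
      rw [hZ] at h3
      omega
    · rintro rfl
      refine ⟨?_, ?_⟩
      · rw [hZ]; omega
      · intro s hs hs0
        rw [hmem] at hs
        rw [hZ]
        omega
  have hfrob : frob S = 2 * m - 1 := by
    apply le_antisymm
    · apply csSup_le
      · exact ⟨2 * m - 1, by rw [Set.mem_compl_iff, hmem]; omega⟩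
      · intro b hb
        rw [Set.mem_compl_iff, hmem] at hb
        omega
    · apply le_csSup
      · refine ⟨2 * m - 1, ?_⟩
        intro b hb
        rw [Set.mem_compl_iff, hmem] at hb
        omega
      · rw [Set.mem_compl_iff, hmem]; omega
  have hAp : Ap S m = {0} ∪ {x | m + 1 ≤ x ∧ x ≤ 2 * m - 2} ∪ {3 * m - 1} := by
    ext x
    simp only [Ap, Set.mem_setOf_eq, Set.mem_union, Set.mem_singleton_iff]
    constructor
    · rintro ⟨hx, hall⟩
      rw [hmem] at hx
      by_cases hxm : m ≤ x
      · have := hall (x - m) (by omega)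
        rw [hmem] at this
        omega
      · omega
    · intro h
      refine ⟨?_, ?_⟩
      · rw [hmem]; omega
      · intro u hu
        rw [hmem]
        omega
  have hmsg : msg S = {x | m ≤ x ∧ x ≤ 2 * m - 2} := by
    ext x
    simp only [msg, Set.mem_diff, Set.mem_singleton_iff, Set.mem_setOf_eq]
    constructor
    · rintro ⟨⟨hx, hx0⟩, hns⟩
      rw [hmem] at hx
      refine ⟨by omega, ?_⟩
      by_contra hgt
      apply hns
      by_cases h3m : x = 3 * m - 1
      · exact ⟨m + 1, ⟨by rw [hmem]; omega, by omega⟩,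
          2 * m - 2, ⟨by rw [hmem]; omega, by omega⟩, by omega⟩
      · exact ⟨m, ⟨by rw [hmem]; omega, by omega⟩,
          x - m, ⟨by rw [hmem]; omega, by omega⟩, by omega⟩
    · rintro ⟨h1, h2⟩
      refine ⟨⟨by rw [hmem]; omega, by omega⟩, ?_⟩
      rintro ⟨a, ⟨ha, ha0⟩, b, ⟨hb, hb0⟩, rfl⟩
      rw [hmem] at ha hb
      omega
  refine ⟨?_, hfrob, hAp, hmsg, ?_⟩
  · rw [typ, hPF, Set.ncard_singleton]
  · rw [embdim, hmsg]
    have : {x | m ≤ x ∧ x ≤ 2 * m - 2} = Set.Icc m (2 * m - 2) := rfl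
    rw [this, ← Finset.coe_Icc, Set.ncard_coe_finset, Nat.card_Icc]
    omega
end

section
/- For integers m, F with 2 ≤ m < F < 2m, the set Δ(m) \ {F} is an almost symmetric numerical semigroup with maximal reduced type and type t(S) = 2m − F. -/
theorem stmt15 (m F : ℕ) (hm : 2 ≤ m) (hmF : m < F) (hF : F < 2 * m)
    (S : Set ℕ) (hS : S = Delta m \ {F}) :
    IsNumericalSemigroup S ∧ 2 * genus S = frob S + typ S ∧
    redtyp S = typ S ∧ typ S = 2 * m - F := by
  subst hS
  have hmem : ∀ x : ℕ, x ∈ Delta m \ {F} ↔ (x = 0 ∨ m ≤ x) ∧ x ≠ F := by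
    intro x
    simp [Delta, Set.mem_diff, Set.mem_union]
  have hcompl : (Delta m \ {F})ᶜ = Set.Ico 1 m ∪ {F} := by
    ext x
    simp only [Set.mem_compl_iff, hmem, Set.mem_union, Set.mem_Ico, Set.mem_singleton_iff]
    omega
  have hZS : ∀ x : ℤ, x ∈ ZS (Delta m \ {F}) ↔
      (0 ≤ x ∧ (x = 0 ∨ (m : ℤ) ≤ x) ∧ x ≠ (F : ℤ)) := by
    intro x
    constructor
    · rintro ⟨n, hn, rfl⟩
      rw [hmem] at hn
      beta_reduce
      omega
    · intro h
      exact ⟨x.toNat, by rw [hmem]; omega, by beta_reduce; omega⟩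
  have hmult : mult (Delta m \ {F}) = m := by
    unfold mult
    apply IsLeast.csInf_eq
    constructor
    · exact ⟨(hmem m).mpr (by omega), by omega⟩
    · rintro s ⟨hs, hs0⟩
      have := (hmem s).mp hs
      omega
  have hfrob : frob (Delta m \ {F}) = F := by
    unfold frob
    apply IsGreatest.csSup_eq
    constructor
    · simp only [Set.mem_compl_iff, hmem]
      omega
    · intro y hy
      simp only [Set.mem_compl_iff, hmem] at hy
      omega
  have hgenus : genus (Delta m \ {F}) = m := by
    unfold genus
    rw [hcompl, Set.union_singleton,
      Set.ncard_insert_of_notMem (by simp; omega)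
        ((Set.finite_Ico 1 m)),
      ← Finset.coe_Ico, Set.ncard_coe_finset, Nat.card_Ico]
    omega
  set T : Set ℤ := Set.Icc ((F : ℤ) - m + 1) ((m : ℤ) - 1) ∪ {(F : ℤ)} with hT
  have hPF : PF (Delta m \ {F}) = T := by
    ext x
    simp only [PF, Set.mem_setOf_eq, hT, Set.mem_union, Set.mem_Icc, Set.mem_singleton_iff]
    constructor
    · rintro ⟨hx, h⟩
      rw [hZS] at hx
      have key : x ≠ 0 → (m : ℤ) ≤ (F : ℤ) - x → False := by
        intro h0 hge
        have hs : ((F : ℤ) - x).toNat ∈ Delta m \ {F} := by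
          rw [hmem]; omega
        have := h _ hs (by omega)
        rw [hZS] at this
        omega
      by_cases hxF : x = (F : ℤ)
      · right; exact hxF
      · left
        have hx0 : x ≠ 0 := by omega
        have hlt : (F : ℤ) - x < m := by
          by_contra hge
          exact key hx0 (by omega)
        omega
    · intro hTx
      refine ⟨by rw [hZS]; omega, fun s hs hs0 => ?_⟩
      rw [hZS]
      have := (hmem s).mp hs
      omega
  have hrPF : rPF (Delta m \ {F}) = T := by
    ext x
    simp only [rPF, Set.mem_setOf_eq, hT, Set.mem_union, Set.mem_Icc, Set.mem_singleton_iff,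
      hmult, hfrob, hZS]
    omega
  have hTcard : T.ncard = 2 * m - F := by
    rw [hT, Set.union_singleton,
      Set.ncard_insert_of_notMem (by simp; omega) (Set.finite_Icc _ _),
      ← Finset.coe_Icc, Set.ncard_coe_finset, Int.card_Icc]
    omega
  have htyp : typ (Delta m \ {F}) = 2 * m - F := by
    rw [typ, hPF, hTcard]
  refine ⟨⟨(hmem 0).mpr (by omega), ?_, ?_⟩, ?_, ?_, htyp⟩
  · intro a ha b hb
    rw [hmem] at *
    omega
  · rw [hcompl]
    exact (Set.finite_Ico 1 m).union (Set.finite_singleton F)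
  · rw [hgenus, hfrob, htyp]; omega
  · rw [redtyp, hrPF, hTcard, htyp]
end

section
/- For any numerical semigroup S, the set {w ∈ Ap(S, m(S)) : w ≥ F(S) + 1} equals {h + m(S) : h ∈ rPF(S)}. -/
theorem stmt16 (S : Set ℕ) (hNS : IsNumericalSemigroup S) (hS : S ≠ Set.univ) :
    (fun n : ℕ => (n : ℤ)) '' {w ∈ Ap S (mult S) | frob S + 1 ≤ w} =
      (fun h : ℤ => h + (mult S : ℤ)) '' rPF S := by
  obtain ⟨h0, hadd, hfin⟩ := hNS
  have hone : (1:ℕ) ∉ S := by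
    intro h1
    apply hS
    ext n; simp only [Set.mem_univ, iff_true]
    induction n with
    | zero => exact h0
    | succ k ih => exact hadd k ih 1 h1
  have hne : {s ∈ S | s ≠ 0}.Nonempty := by
    have hinf : S.Infinite := by
      simpa using hfin.infinite_compl
    obtain ⟨s, hs⟩ := (hinf.diff (Set.finite_singleton 0)).nonempty
    exact ⟨s, hs.1, by simpa using hs.2⟩
  have hmS : mult S ∈ S ∧ mult S ≠ 0 := Nat.sInf_mem hne
  have hmmin : ∀ s ∈ S, s ≠ 0 → mult S ≤ s := fun s hs h0' => Nat.sInf_le ⟨hs, h0'⟩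
  have hm2 : 2 ≤ mult S := by
    rcases hmS with ⟨hmem, hne0⟩
    have : mult S ≠ 1 := fun h => hone (h ▸ hmem)
    omega
  have hm1 : mult S - 1 ∉ S := fun h => by have := hmmin _ h (by omega); omega
  have hFne : Sᶜ.Nonempty := Set.nonempty_compl.mpr hS
  have hFub : ∀ x, x ∉ S → x ≤ frob S := fun x hx => le_csSup hfin.bddAbove hx
  have hmF : mult S ≤ frob S + 1 := by have := hFub _ hm1; omega
  have hgt : ∀ x, frob S < x → x ∈ S := by
    intro x hx; by_contra h; exact absurd (hFub x h) (by omega)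
  have hZS : ∀ n : ℕ, ((n:ℤ) ∈ ZS S ↔ n ∈ S) := by
    intro n
    constructor
    · rintro ⟨k, hk, hke⟩
      have hke' : (k:ℤ) = (n:ℤ) := hke
      have : k = n := by exact_mod_cast hke'

      rwa [this] at hk
    · intro h; exact ⟨n, h, rfl⟩
  ext z
  simp only [Set.mem_image, Set.mem_setOf_eq, Ap, rPF]
  constructor
  · rintro ⟨w, ⟨⟨hwS, hwAp⟩, hwF⟩, rfl⟩
    have hwm : mult S ≤ w := by omega
    have hnot : w - mult S ∉ S := hwAp (w - mult S) (by omega)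
    refine ⟨(w:ℤ) - mult S, ⟨?_, by omega, ?_⟩, by ring⟩
    · rw [show (w:ℤ) - mult S = ((w - mult S : ℕ) : ℤ) by omega, hZS]
      exact hnot
    · have := hFub _ hnot; omega
  · rintro ⟨x, ⟨hxZ, hx1, hx2⟩, rfl⟩
    have hx0 : 0 ≤ x := by omega
    refine ⟨(x + mult S).toNat, ⟨⟨?_, ?_⟩, by omega⟩, by omega⟩
    · exact hgt _ (by omega)
    · intro u hu huS
      apply hxZ
      rw [show x = ((u:ℕ):ℤ) by omega, hZS]
      exact huS
end

section
/- For integers F, m with 2 ≤ m < F and m not dividing F, the set Δ(F, m) = {km : k ∈ ℕ} ∪ {x ∈ ℕ : x ≥ F + 1} is a numerical semigroup with Frobenius number F, multiplicity m, and its second smallest minimal generator satisfies n₂ ≥ F + 1; consequently s(S) = m − 1 and S is MED with maximal reduced type. -/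
lemma countOne (m a : ℕ) (hm : 2 ≤ m) :
    ((Finset.Ioc a (a+m)).filter (fun x => m ∣ x)).card = 1 := by
  rw [Finset.card_eq_one]
  refine ⟨m * ((a+m)/m), ?_⟩
  have hm0 : 0 < m := by omega
  have h1 := Nat.div_mul_le_self (a+m) m
  have hd := Nat.div_add_mod (a+m) m
  have hmod := Nat.mod_lt (a+m) hm0
  have h2 : a + m < m * ((a+m)/m) + m := by omega
  ext x
  simp only [Finset.mem_filter, Finset.mem_Ioc, Finset.mem_singleton]
  constructor
  · rintro ⟨⟨hx1, hx2⟩, k, rfl⟩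
    have hk : k = (a+m)/m := by
      rcases Nat.lt_trichotomy k ((a+m)/m) with h | h | h
      · have : m * k + m ≤ m * ((a+m)/m) := by
          calc m * k + m = m * (k+1) := by ring
          _ ≤ m * ((a+m)/m) := Nat.mul_le_mul_left m h
        nlinarith [Nat.div_mul_le_self (a+m) m]
      · exact h
      · have : m * ((a+m)/m) + m ≤ m * k := by
          calc m * ((a+m)/m) + m = m * ((a+m)/m + 1) := by ring
          _ ≤ m * k := Nat.mul_le_mul_left m h
        nlinarith
    rw [hk]
  · rintro rfl
    refine ⟨⟨?_, by nlinarith⟩, Dvd.intro _ rfl⟩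
    nlinarith

lemma countlem (m a : ℕ) (hm : 2 ≤ m) :
    ((Finset.Ioc a (a+m)).filter (fun x => ¬ m ∣ x)).card = m - 1 := by
  have h := Finset.card_filter_add_card_filter_not
    (s := Finset.Ioc a (a+m)) (p := fun x => m ∣ x)
  rw [countOne m a hm, Nat.card_Ioc] at h
  omega


theorem stmt19 (F m : ℕ) (hm : 2 ≤ m) (hmF : m < F) (hdvd : ¬ m ∣ F)
    (S : Set ℕ) (hS : S = {x : ℕ | m ∣ x} ∪ {x : ℕ | F + 1 ≤ x}) :
    IsNumericalSemigroup S ∧ frob S = F ∧ mult S = m ∧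
    F + 1 ≤ secondGen S ∧ redtyp S = m - 1 ∧ typ S = m - 1 ∧
    embdim S = m ∧ redtyp S = typ S := by
  have hmem : ∀ x : ℕ, x ∈ S ↔ m ∣ x ∨ F + 1 ≤ x := by
    intro x; rw [hS]; simp [Set.mem_union, Set.mem_setOf_eq]
  have hnotmem : ∀ x : ℕ, x ∉ S ↔ ¬ m ∣ x ∧ x ≤ F := by
    intro x; rw [hmem]; push_neg; omega
  have hFnot : F ∉ S := (hnotmem F).2 ⟨hdvd, le_refl F⟩
  have hge : ∀ x ∈ S, x ≠ 0 → m ≤ x := by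
    intro x hx hx0
    rcases (hmem x).1 hx with h | h
    · exact Nat.le_of_dvd (Nat.pos_of_ne_zero hx0) h
    · omega
  have hmS : m ∈ S := (hmem m).2 (Or.inl dvd_rfl)
  -- numerical semigroup
  have hNS : IsNumericalSemigroup S := by
    refine ⟨(hmem 0).2 (Or.inl (dvd_zero m)), ?_, ?_⟩
    · intro a ha b hb
      rcases (hmem a).1 ha with h1 | h1 <;> rcases (hmem b).1 hb with h2 | h2
      · exact (hmem _).2 (Or.inl (Dvd.dvd.add h1 h2))
      · exact (hmem _).2 (Or.inr (by omega))
      · exact (hmem _).2 (Or.inr (by omega))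
      · exact (hmem _).2 (Or.inr (by omega))
    · refine (Set.finite_Iic F).subset ?_
      intro x hx
      exact ((hnotmem x).1 hx).2
  -- frobenius
  have hfrob : frob S = F := by
    refine le_antisymm (csSup_le ⟨F, hFnot⟩ ?_) (le_csSup ⟨F, ?_⟩ hFnot)
    · intro x hx; exact ((hnotmem x).1 hx).2
    · intro x hx; exact ((hnotmem x).1 hx).2
  -- multiplicity
  have hmult : mult S = m := by
    refine le_antisymm (Nat.sInf_le ⟨hmS, by omega⟩) ?_
    have hne : {s ∈ S | s ≠ 0}.Nonempty := ⟨m, hmS, by omega⟩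
    have := Nat.sInf_mem hne
    exact hge _ this.1 this.2
  -- ZS characterization
  have hZS : ∀ x : ℤ, x ∈ ZS S ↔ 0 ≤ x ∧ ((m:ℤ) ∣ x ∨ (F:ℤ) + 1 ≤ x) := by
    intro x
    constructor
    · rintro ⟨n, hn, rfl⟩
      dsimp only
      refine ⟨Int.natCast_nonneg n, ?_⟩
      rcases (hmem n).1 hn with h | h
      · exact Or.inl (Int.natCast_dvd_natCast.2 h)
      · exact Or.inr (by exact_mod_cast h)
    · rintro ⟨hx0, h⟩
      refine ⟨x.toNat, ?_, (Int.toNat_of_nonneg hx0)⟩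
      rw [hmem]
      rcases h with h | h
      · left
        have : (m:ℤ) ∣ (x.toNat : ℤ) := by rwa [Int.toNat_of_nonneg hx0]
        exact_mod_cast this
      · right; omega
  -- the reduced/PF set
  set Efin : Finset ℕ := (Finset.Ioc (F - m) F).filter (fun x => ¬ m ∣ x) with hEfin
  have hEcard : Efin.card = m - 1 := by
    have h := countlem m (F - m) hm
    have h2 : F - m + m = F := by omega
    rw [h2] at h
    rw [hEfin]; exact h
  have hEmem : ∀ x : ℤ, x ∈ (fun n : ℕ => (n:ℤ)) '' ↑Efin ↔
      ((F:ℤ) - m + 1 ≤ x ∧ x ≤ F ∧ ¬ (m:ℤ) ∣ x) := by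
    intro x
    constructor
    · rintro ⟨n, hn, rfl⟩
      dsimp only
      simp only [hEfin, Finset.coe_filter, Set.mem_setOf_eq, Finset.mem_Ioc] at hn
      refine ⟨by omega, by exact_mod_cast hn.1.2, ?_⟩
      intro hc
      exact hn.2 (by exact_mod_cast hc)
    · rintro ⟨h1, h2, h3⟩
      have hx0 : 0 ≤ x := by omega
      refine ⟨x.toNat, ?_, Int.toNat_of_nonneg hx0⟩
      simp only [hEfin, Finset.coe_filter, Set.mem_setOf_eq, Finset.mem_Ioc]
      refine ⟨⟨by omega, by omega⟩, ?_⟩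
      intro hc
      apply h3
      have : (m:ℤ) ∣ (x.toNat : ℤ) := Int.natCast_dvd_natCast.2 hc
      rwa [Int.toNat_of_nonneg hx0] at this
  have hPFeq : PF S = (fun n : ℕ => (n:ℤ)) '' ↑Efin := by
    ext x
    rw [hEmem]
    constructor
    · rintro ⟨hx, hall⟩
      rw [hZS] at hx; push_neg at hx
      have hxm := hall m hmS (by omega)
      rw [hZS] at hxm
      have hxF : x ≤ (F:ℤ) := by
        by_contra hc
        push_neg at hc
        have := (hx (by omega)).2
        omega
      have hx0 : 0 ≤ x := by
        by_contra hc
        push_neg at hc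
        have h1 : (m:ℤ) ∣ x + m := by
          rcases hxm.2 with h | h
          · exact h
          · omega
        have h2 : x + m = 0 := by
          rcases h1 with ⟨k, hk⟩
          have hb1 : (0:ℤ) ≤ (m:ℤ) * k := by linarith [hxm.1]
          have hb2 : (m:ℤ) * k < m := by
            have : (0:ℤ) < m := by exact_mod_cast (by omega : 0 < m)
            linarith
          have hk0 : k = 0 := by
            by_contra h0
            rcases lt_or_gt_of_ne h0 with h | h
            · have : (m:ℤ) * k < 0 := by
                have hm0 : (0:ℤ) < m := by exact_mod_cast (by omega : 0 < m)
                exact mul_neg_of_pos_of_neg hm0 h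
              omega
            · have hm0 : (0:ℤ) < m := by exact_mod_cast (by omega : 0 < m)
              have : (m:ℤ) * 1 ≤ m * k := by
                apply mul_le_mul_of_nonneg_left _ (le_of_lt hm0)
                omega
              omega
          rw [hk0] at hk
          simpa using hk
        have hFm : F + m ∈ S := (hmem _).2 (Or.inr (by omega))
        have hz := hall (F + m) hFm (by omega)
        rw [hZS] at hz
        rcases hz.2 with h | h
        · have hdF : (m:ℤ) ∣ (F:ℤ) := by
            have hx' : x = -(m:ℤ) := by omega
            rw [hx'] at h
            push_cast at h
            have he : -(m:ℤ) + ((F:ℤ) + (m:ℤ)) = (F:ℤ) := by ring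
            rwa [he] at h
          exact hdvd (by exact_mod_cast hdF)
        · push_cast at h; omega
      have hndvd : ¬ (m:ℤ) ∣ x := fun hc => (hx hx0).1 hc
      have hlow : (F:ℤ) - m + 1 ≤ x := by
        rcases hxm.2 with h | h
        · exfalso
          have h2 := h.sub (dvd_refl (m:ℤ))
          simp only [add_sub_cancel_right] at h2
          exact hndvd h2
        · omega
      exact ⟨hlow, hxF, hndvd⟩
    · rintro ⟨h1, h2, h3⟩
      constructor
      · rw [hZS]; push_neg
        intro _
        exact ⟨h3, by omega⟩
      · intro s hs hs0
        have hms : (m:ℤ) ≤ (s:ℤ) := by exact_mod_cast hge s hs hs0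
        rw [hZS]
        exact ⟨by omega, Or.inr (by omega)⟩
  have hrPFeq : rPF S = (fun n : ℕ => (n:ℤ)) '' ↑Efin := by
    ext x
    rw [hEmem]
    simp only [rPF, Set.mem_setOf_eq, hfrob, hmult, hZS]
    push_neg
    constructor
    · rintro ⟨hx, h1, h2⟩
      exact ⟨h1, h2, fun hc => (hx (by omega)).1 hc⟩
    · rintro ⟨h1, h2, h3⟩
      exact ⟨fun _ => ⟨h3, by omega⟩, h1, h2⟩
  have hncardE : ((fun n : ℕ => (n:ℤ)) '' ↑Efin).ncard = m - 1 := by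
    rw [Set.ncard_image_of_injective _ Nat.cast_injective, Set.ncard_coe_finset, hEcard]
  have hredtyp : redtyp S = m - 1 := by rw [redtyp, hrPFeq, hncardE]
  have htyp : typ S = m - 1 := by rw [typ, hPFeq, hncardE]
  -- msg
  set Gfin : Finset ℕ := (Finset.Ioc F (F + m)).filter (fun x => ¬ m ∣ x) with hGfin
  have hGcard : Gfin.card = m - 1 := countlem m F hm
  have hGmem : ∀ x : ℕ, x ∈ (↑Gfin : Set ℕ) ↔ (F + 1 ≤ x ∧ x ≤ F + m ∧ ¬ m ∣ x) := by
    intro x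
    simp only [hGfin, Finset.coe_filter, Set.mem_setOf_eq, Finset.mem_Ioc]
    constructor
    · rintro ⟨⟨a, b⟩, c⟩; exact ⟨a, b, c⟩
    · rintro ⟨a, b, c⟩; exact ⟨⟨a, b⟩, c⟩
  have hmsg : msg S = insert m (↑Gfin : Set ℕ) := by
    ext x
    simp only [msg, Set.mem_diff, Set.mem_singleton_iff, Set.mem_setOf_eq, Set.mem_insert_iff,
      hGmem]
    constructor
    · rintro ⟨⟨hxS, hx0⟩, hnsum⟩
      rcases (hmem x).1 hxS with h | h
      · left
        by_contra hc
        rcases h with ⟨k, rfl⟩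
        have hk2 : 2 ≤ k := by
          rcases Nat.lt_or_ge k 2 with hlt | hge2
          · interval_cases k
            · simp at hx0
            · simp at hc
          · exact hge2
        have hpos : 0 < m * (k-1) := Nat.mul_pos (by omega) (by omega)
        have hsum : m * k = m + m * (k - 1) := by
          have h1 : k - 1 + 1 = k := by omega
          calc m * k = m * (k - 1 + 1) := by rw [h1]
          _ = m + m * (k-1) := by ring
        exact hnsum ⟨m, ⟨hmS, by omega⟩, m * (k - 1),
          ⟨(hmem _).2 (Or.inl ⟨k - 1, rfl⟩), by omega⟩, hsum⟩
      · by_cases hdx : m ∣ x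
        · exfalso
          rcases hdx with ⟨k, rfl⟩
          have hk2 : 2 ≤ k := by nlinarith
          have hpos : 0 < m * (k-1) := Nat.mul_pos (by omega) (by omega)
          have hsum : m * k = m + m * (k - 1) := by
            have h1 : k - 1 + 1 = k := by omega
            calc m * k = m * (k - 1 + 1) := by rw [h1]
            _ = m + m * (k-1) := by ring
          exact hnsum ⟨m, ⟨hmS, by omega⟩, m * (k - 1),
            ⟨(hmem _).2 (Or.inl ⟨k - 1, rfl⟩), by omega⟩, hsum⟩
        · right
          refine ⟨h, ?_, hdx⟩
          by_contra hc
          push_neg at hc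
          exact hnsum ⟨m, ⟨hmS, by omega⟩, x - m,
            ⟨(hmem _).2 (Or.inr (by omega)), by omega⟩, by omega⟩
    · rintro (rfl | ⟨h1, h2, h3⟩)
      · refine ⟨⟨hmS, by omega⟩, ?_⟩
        rintro ⟨a, ⟨ha, ha0⟩, b, ⟨hb, hb0⟩, hab⟩
        have := hge a ha ha0
        have := hge b hb hb0
        omega
      · refine ⟨⟨(hmem x).2 (Or.inr h1), by omega⟩, ?_⟩
        rintro ⟨a, ⟨ha, ha0⟩, b, ⟨hb, hb0⟩, rfl⟩
        have hma := hge a ha ha0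
        have hmb := hge b hb hb0
        have hda : m ∣ a := by
          rcases (hmem a).1 ha with h | h
          · exact h
          · omega
        have hdb : m ∣ b := by
          rcases (hmem b).1 hb with h | h
          · exact h
          · omega
        exact h3 (Dvd.dvd.add hda hdb)
  have hmnotG : m ∉ (↑Gfin : Set ℕ) := by
    rw [hGmem]
    rintro ⟨h1, -, -⟩
    omega
  have hembdim : embdim S = m := by
    rw [embdim, hmsg, Set.ncard_insert_of_notMem hmnotG (Gfin.finite_toSet),
      Set.ncard_coe_finset, hGcard]
    omega
  have hdiff : msg S \ {mult S} = (↑Gfin : Set ℕ) := by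
    rw [hmsg, hmult]
    ext x
    simp only [Set.mem_diff, Set.mem_insert_iff, Set.mem_singleton_iff]
    constructor
    · rintro ⟨h | h, hne⟩
      · exact absurd h hne
      · exact h
    · intro h
      refine ⟨Or.inr h, ?_⟩
      intro hc
      rw [hc] at h
      exact hmnotG h
  have hsecond : F + 1 ≤ secondGen S := by
    rw [secondGen, hdiff]
    have hne : ((↑Gfin : Set ℕ)).Nonempty := by
      rw [← Set.ncard_pos (Gfin.finite_toSet), Set.ncard_coe_finset, hGcard]
      omega
    have := Nat.sInf_mem hne
    exact ((hGmem _).1 this).1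
  exact ⟨hNS, hfrob, hmult, hsecond, hredtyp, htyp, hembdim, hredtyp.trans htyp.symm⟩
end
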